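/- arXiv:2312.03092 — 10 statements merged into one kernel-verified Lean document; each statement's English description precedes it below -/
import Mathlib

section
/- Let 𝔊 be a finite group generated by a set of involutions (elements of order dividing 2). Then there exists a finite connected simple graph G with a proper edge coloring κ such that the coloring group 𝔊_κ is isomorphic to 𝔊. -/
open scoped Classical

/-- A proper edge coloring of a finite simple graph `G` with colors `{1, …, k}`:
it assigns colors in `{1, …, k}` to edges, is surjective onto `{1, …, k}`, and
incident edges receive distinct colors. -/
def IsProperEdgeColoring {V : Type*} (G : SimpleGraph V) (k : ℕ) (κ : Sym2 V → ℕ) : Prop :=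
  (∀ e ∈ G.edgeSet, κ e ∈ Finset.Icc 1 k) ∧
  (∀ a ∈ Finset.Icc 1 k, ∃ e ∈ G.edgeSet, κ e = a) ∧
  (∀ u v w : V, G.Adj u v → G.Adj u w → v ≠ w → κ s(u, v) ≠ κ s(u, w))
/-- `IsToggle G κ a τ` says that the permutation `τ` is the product of the
transpositions `(i j)` over all edges `{i,j}` of `G` colored `a`: it swaps the two
endpoints of every edge colored `a` and fixes all other vertices. -/
def IsToggle {V : Type*} (G : SimpleGraph V) (κ : Sym2 V → ℕ) (a : ℕ) (τ : Equiv.Perm V) : Prop :=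
  ∀ v w : V, v ≠ w → (τ v = w ↔ G.Adj v w ∧ κ s(v, w) = a)
/-- The coloring group `𝔊_κ`: the subgroup of `Sym(V)` generated by the
permutations `τ_1, …, τ_k` associated to the colors `1, …, k`. -/
def coloringGroup {V : Type*} (G : SimpleGraph V) (k : ℕ) (κ : Sym2 V → ℕ) :
    Subgroup (Equiv.Perm V) :=
  Subgroup.closure { τ : Equiv.Perm V | ∃ a : ℕ, 1 ≤ a ∧ a ≤ k ∧ IsToggle G κ a τ }

/-! The graph is the Cayley graph of `𝔊` with respect to `T = S \ {1}`, the edge `{g, g * t}`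
colored by `t` (well defined because `t = t⁻¹`). The toggle of the color of `t` is then
right multiplication by `t`, so the coloring group is the image of `⟨T⟩ = 𝔊` under the right
regular representation, which is faithful. -/

theorem IsToggle.unique {V : Type*} {G : SimpleGraph V} {κ : Sym2 V → ℕ} {a : ℕ}
    {τ σ : Equiv.Perm V} (hτ : IsToggle G κ a τ) (hσ : IsToggle G κ a σ) : τ = σ := by
  ext v
  by_cases hv : τ v = v
  · by_cases hv' : σ v = v
    · rw [hv, hv']
    · exact (hτ v (σ v) (Ne.symm hv')).2 ((hσ v (σ v) (Ne.symm hv')).1 rfl)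
  · exact ((hσ v (τ v) (Ne.symm hv)).2 ((hτ v (τ v) (Ne.symm hv)).1 rfl)).symm

section Relabel

variable {V W : Type*} (e : W ≃ V) {G : SimpleGraph V} {k : ℕ} {κ : Sym2 V → ℕ}

theorem IsProperEdgeColoring.comap (h : IsProperEdgeColoring G k κ) :
    IsProperEdgeColoring (G.comap e) k (κ ∘ Sym2.map e) := by
  obtain ⟨hcol, hsurj, hprop⟩ := h
  refine ⟨fun x hx => hcol _ ?_, fun a ha => ?_, fun u v w huv huw hvw => ?_⟩
  · induction x using Sym2.ind
    simpa using hx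
  · obtain ⟨x, hx, rfl⟩ := hsurj a ha
    induction x using Sym2.ind with
    | _ v w => exact ⟨s(e.symm v, e.symm w), by simpa using hx, by simp⟩
  · simpa using hprop _ _ _ huv huw (e.injective.ne hvw)

theorem isToggle_comap_iff {a : ℕ} {τ : Equiv.Perm W} :
    IsToggle (G.comap e) (κ ∘ Sym2.map e) a τ ↔ IsToggle G κ a (e.permCongr τ) := by
  refine ⟨fun h v w hvw => ?_, fun h v w hvw => ?_⟩
  · simpa [← e.eq_symm_apply] using h (e.symm v) (e.symm w) (by simpa using hvw)
  · simpa [← e.eq_symm_apply] using h (e v) (e w) (e.injective.ne hvw)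

theorem coloringGroup_comap :
    coloringGroup (G.comap e) k (κ ∘ Sym2.map e) =
      (coloringGroup G k κ).map (e.symm.permCongrHom : Equiv.Perm V →* Equiv.Perm W) := by
  rw [coloringGroup, coloringGroup, MonoidHom.map_closure]
  congr 1
  ext τ
  simp [isToggle_comap_iff]

end Relabel

namespace SimpleGraph

variable {𝔊 : Type*} [Group 𝔊]

theorem mulCayley_reachable_mul {s : Set 𝔊} (x : 𝔊) {g : 𝔊} (hg : g ∈ s) :
    (mulCayley s).Reachable x (x * g) := by
  by_cases hx : x = x * g
  · rw [← hx]
  · exact Adj.reachable ((mulCayley_adj' s _ _).2 ⟨hx, g, hg, Or.inl rfl⟩)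

theorem mulCayley_connected {s : Set 𝔊} (hs : Subgroup.closure s = ⊤) :
    (mulCayley s).Connected := by
  refine (connected_iff_exists_forall_reachable _).2 ⟨1, fun x => ?_⟩
  have hx : x ∈ Subgroup.closure s := hs ▸ Subgroup.mem_top x
  induction hx using Subgroup.closure_induction_right with
  | one => rfl
  | mul_right x _ g hg ih => exact ih.trans (mulCayley_reachable_mul x hg)
  | mul_inv_cancel x _ g hg ih =>
    exact ih.trans (by simpa using (mulCayley_reachable_mul (x * g⁻¹) hg).symm)

theorem mulCayley_adj_iff_of_inv_eq_self {T : Set 𝔊} (hT : ∀ t ∈ T, t⁻¹ = t)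
    (h1 : 1 ∉ T) {u v : 𝔊} : (mulCayley T).Adj u v ↔ u⁻¹ * v ∈ T := by
  have hinv : v⁻¹ * u = (u⁻¹ * v)⁻¹ := by group
  rw [mulCayley_adj, hinv]
  refine ⟨fun ⟨_, h⟩ => h.elim id fun h => ?_, fun h => ⟨?_, .inl h⟩⟩
  · rwa [← inv_inv (u⁻¹ * v), hT _ h]
  · rintro rfl
    exact h1 (by simpa using h)

end SimpleGraph

section CayleyColoring

open SimpleGraph

variable {𝔊 : Type*} [Group 𝔊]

def rightRegular (𝔊 : Type*) [Group 𝔊] : 𝔊 →* Equiv.Perm 𝔊 :=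
  (MulAction.toPermHom 𝔊ᵐᵒᵖ 𝔊).comp (MulEquiv.inv' 𝔊).toMonoidHom

@[simp]
theorem rightRegular_apply (g v : 𝔊) : rightRegular 𝔊 g v = v * g⁻¹ := by
  simp [rightRegular]

theorem rightRegular_injective : Function.Injective (rightRegular 𝔊) :=
  MulAction.toPerm_injective.comp (MulEquiv.inv' 𝔊).injective

def cayleyColoring (c : 𝔊 → ℕ) (hc : ∀ x, c x⁻¹ = c x) : Sym2 𝔊 → ℕ :=
  Sym2.lift ⟨fun u v => c (u⁻¹ * v),
    fun u v => by simp only [← hc (u⁻¹ * v), mul_inv_rev, inv_inv]⟩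

@[simp]
theorem cayleyColoring_mk {c : 𝔊 → ℕ} (hc : ∀ x, c x⁻¹ = c x) (u v : 𝔊) :
    cayleyColoring c hc s(u, v) = c (u⁻¹ * v) :=
  rfl

variable {T : Set 𝔊} (hT : ∀ t ∈ T, t⁻¹ = t) (h1 : 1 ∉ T) {k : ℕ} {c : 𝔊 → ℕ}
  (hc : ∀ x, c x⁻¹ = c x)
include hT h1

theorem isProperEdgeColoring_cayleyColoring (hbij : Set.BijOn c T (Set.Icc 1 k)) :
    IsProperEdgeColoring (mulCayley T) k (cayleyColoring c hc) := by
  refine ⟨fun x hx => ?_, fun a ha => ?_, fun u v w huv huw hvw => ?_⟩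
  · induction x using Sym2.ind with
    | _ u v =>
      rw [mem_edgeSet, mulCayley_adj_iff_of_inv_eq_self hT h1] at hx
      simpa using hbij.mapsTo hx
  · obtain ⟨t, ht, rfl⟩ := hbij.surjOn (by simpa using ha)
    exact ⟨s(1, t), by simpa [mulCayley_adj_iff_of_inv_eq_self hT h1] using ht, by simp⟩
  · rw [mulCayley_adj_iff_of_inv_eq_self hT h1] at huv huw
    simpa [cayleyColoring_mk] using hbij.injOn.ne huv huw (by simpa using hvw)

theorem isToggle_cayleyColoring (hinj : Set.InjOn c T) {t : 𝔊} (ht : t ∈ T) :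
    IsToggle (mulCayley T) (cayleyColoring c hc) (c t) (rightRegular 𝔊 t) := by
  intro v w _
  rw [mulCayley_adj_iff_of_inv_eq_self hT h1, cayleyColoring_mk, rightRegular_apply, hT t ht,
    ← eq_inv_mul_iff_mul_eq, eq_comm]
  exact ⟨fun h => by rw [h]; exact ⟨ht, rfl⟩, fun h => hinj h.1 ht h.2⟩

theorem coloringGroup_cayleyColoring (hbij : Set.BijOn c T (Set.Icc 1 k)) :
    coloringGroup (mulCayley T) k (cayleyColoring c hc) =
      (Subgroup.closure T).map (rightRegular 𝔊) := by
  rw [coloringGroup, MonoidHom.map_closure]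
  congr 1
  ext τ
  constructor
  · rintro ⟨a, ha1, hak, hτ⟩
    obtain ⟨t, ht, rfl⟩ := hbij.surjOn ⟨ha1, hak⟩
    exact ⟨t, ht, (isToggle_cayleyColoring hT h1 hc hbij.injOn ht).unique hτ⟩
  · rintro ⟨t, ht, rfl⟩
    obtain ⟨hct1, hctk⟩ := hbij.mapsTo ht
    exact ⟨c t, hct1, hctk, isToggle_cayleyColoring hT h1 hc hbij.injOn ht⟩

end CayleyColoring

theorem exists_bijOn_Icc_of_inv_eq_self {𝔊 : Type*} [Group 𝔊] {T : Set 𝔊} [Finite T]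
    (hT : ∀ t ∈ T, t⁻¹ = t) :
    ∃ (k : ℕ) (c : 𝔊 → ℕ), (∀ x, c x⁻¹ = c x) ∧ Set.BijOn c T (Set.Icc 1 k) := by
  classical
  let e := Finite.equivFin T
  let c : 𝔊 → ℕ := fun x => if h : x ∈ T then e ⟨x, h⟩ + 1 else 0
  have hc_mem {t : 𝔊} (ht : t ∈ T) : c t = e ⟨t, ht⟩ + 1 := dif_pos ht
  refine ⟨Nat.card T, c, fun x => ?_, fun t ht => ?_, fun t ht u hu htu => ?_, fun a ha => ?_⟩
  · by_cases hx : x ∈ T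
    · rw [hT x hx]
    · have hx' : x⁻¹ ∉ T := fun h => hx (by rw [← inv_inv x, hT _ h]; exact h)
      simp [c, hx, hx']
  · simp [hc_mem ht]
  · rw [hc_mem ht, hc_mem hu, add_left_inj, Fin.val_inj, e.apply_eq_iff_eq] at htu
    exact congrArg Subtype.val htu
  · obtain ⟨ha1, hak⟩ := ha
    let t := e.symm ⟨a - 1, by omega⟩
    refine ⟨t, t.2, ?_⟩
    rw [hc_mem t.2]
    simp only [t, Subtype.coe_eta, Equiv.apply_symm_apply]
    omega

/-- Every finite group generated by a set of involutions is isomorphic to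
the coloring group of a proper edge coloring of some finite connected simple graph. -/
theorem stmt_0 (𝔊 : Type*) [Group 𝔊] [Fintype 𝔊] (S : Set 𝔊)
    (hinv : ∀ g ∈ S, g * g = 1) (hgen : Subgroup.closure S = ⊤) :
    ∃ (n : ℕ) (G : SimpleGraph (Fin n)) (k : ℕ) (κ : Sym2 (Fin n) → ℕ),
      G.Connected ∧ IsProperEdgeColoring G k κ ∧
      Nonempty (↥(coloringGroup G k κ) ≃* 𝔊) := by
  set T := S \ {1}
  have hT : ∀ t ∈ T, t⁻¹ = t := fun t ht => inv_eq_of_mul_eq_one_right (hinv t ht.1)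
  have h1 : (1 : 𝔊) ∉ T := fun h => h.2 rfl
  have hgenT : Subgroup.closure T = ⊤ := (Subgroup.closure_sdiff_one S).trans hgen
  obtain ⟨k, c, hc, hbij⟩ := exists_bijOn_Icc_of_inv_eq_self hT
  let e := (Fintype.equivFin 𝔊).symm
  refine ⟨Fintype.card 𝔊, (SimpleGraph.mulCayley T).comap e, k,
    cayleyColoring c hc ∘ Sym2.map e,
    (SimpleGraph.Iso.comap e _).connected_iff.2 (SimpleGraph.mulCayley_connected hgenT),
    (isProperEdgeColoring_cayleyColoring hT h1 hc hbij).comap e, ⟨?_⟩⟩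
  rw [coloringGroup_comap, coloringGroup_cayleyColoring hT h1 hc hbij, hgenT,
    ← MonoidHom.range_eq_map]
  exact (e.symm.permCongrHom.subgroupMap _).symm.trans
    (MonoidHom.ofInjective rightRegular_injective).symm
end

section
/- Let (G,κ) be a proper edge coloring of a finite simple graph. Then the centralizer of the coloring group 𝔊_κ in Sym(V(G)) is equal (as a subgroup of Sym(V(G))) to Aut_κ(G). -/
open scoped Classical

/-- `IsColorAut G κ σ`: membership in `Aut_κ(G)`, i.e. `{i,j}` is an edge of `G`
colored `a` if and only if `{σ i, σ j}` is an edge of `G` colored `a`. -/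
def IsColorAut {V : Type*} (G : SimpleGraph V) (κ : Sym2 V → ℕ) (σ : Equiv.Perm V) : Prop :=
  ∀ i j : V, ∀ a : ℕ,
    (G.Adj i j ∧ κ s(i, j) = a) ↔ (G.Adj (σ i) (σ j) ∧ κ s(σ i, σ j) = a)

section Aux

variable {V : Type*} (G : SimpleGraph V) (k : ℕ) (κ : Sym2 V → ℕ) (a : ℕ)

lemma color_unique (hκ : IsProperEdgeColoring G k κ) {u v w : V} (h1 : G.Adj u v)
    (h2 : G.Adj u w) (hc1 : κ s(u, v) = a) (hc2 : κ s(u, w) = a) : v = w := by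
  by_contra h
  exact hκ.2.2 u v w h1 h2 h (hc1.trans hc2.symm)

noncomputable def toggleFun : V → V := fun v =>
  if h : ∃ w, G.Adj v w ∧ κ s(v, w) = a then h.choose else v

lemma toggle_exists (hκ : IsProperEdgeColoring G k κ) :
    ∃ τ : Equiv.Perm V, IsToggle G κ a τ := by
  have inv : Function.Involutive (toggleFun G κ a) := by
    intro v
    by_cases h : ∃ w, G.Adj v w ∧ κ s(v, w) = a
    · obtain ⟨hw1, hw2⟩ := h.choose_spec
      have h1 : toggleFun G κ a v = h.choose := dif_pos h
      rw [h1]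
      have h' : ∃ w, G.Adj h.choose w ∧ κ s(h.choose, w) = a :=
        ⟨v, hw1.symm, by rwa [Sym2.eq_swap]⟩
      obtain ⟨hc1, hc2⟩ := h'.choose_spec
      have h2 : toggleFun G κ a h.choose = h'.choose := dif_pos h'
      rw [h2]
      exact color_unique G k κ a hκ hc1 hw1.symm hc2 (by rwa [Sym2.eq_swap])
    · have h1 : toggleFun G κ a v = v := dif_neg h
      rw [h1, h1]
  refine ⟨inv.toPerm, fun v w hvw => ?_⟩
  constructor
  · intro htv
    by_cases h : ∃ w, G.Adj v w ∧ κ s(v, w) = a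
    · have h1 : toggleFun G κ a v = h.choose := dif_pos h
      have : h.choose = w := by
        rw [← h1]; exact htv
      rw [← this]; exact h.choose_spec
    · exact absurd ((dif_neg h : toggleFun G κ a v = v).symm.trans htv) hvw
  · rintro ⟨hadj, hcol⟩
    have h : ∃ w, G.Adj v w ∧ κ s(v, w) = a := ⟨w, hadj, hcol⟩
    have h1 : toggleFun G κ a v = h.choose := dif_pos h
    show toggleFun G κ a v = w
    rw [h1]
    exact color_unique G k κ a hκ h.choose_spec.1 hadj h.choose_spec.2 hcol

end Aux

/-- The centralizer of the coloring group `𝔊_κ` in `Sym(V)` consists of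
exactly the elements of `Aut_κ(G)`. -/
theorem stmt_2 {V : Type*} [Fintype V] (G : SimpleGraph V) (k : ℕ) (κ : Sym2 V → ℕ)
    (hκ : IsProperEdgeColoring G k κ) :
    ∀ σ : Equiv.Perm V,
      σ ∈ Subgroup.centralizer (coloringGroup G k κ : Set (Equiv.Perm V)) ↔
        IsColorAut G κ σ := by

  intro σ
  constructor
  · intro hσ
    have key : ∀ ρ : Equiv.Perm V,
        ρ ∈ Subgroup.centralizer (coloringGroup G k κ : Set (Equiv.Perm V)) →
        ∀ i j a, G.Adj i j → κ s(i, j) = a → G.Adj (ρ i) (ρ j) ∧ κ s(ρ i, ρ j) = a := by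
      intro ρ hρ i j a hadj hcol
      have ha : a ∈ Finset.Icc 1 k := hcol ▸ hκ.1 _ (G.mem_edgeSet.mpr hadj)
      rw [Finset.mem_Icc] at ha
      obtain ⟨τ, hτ⟩ := toggle_exists G k κ a hκ
      have hmem : τ ∈ coloringGroup G k κ :=
        Subgroup.subset_closure ⟨a, ha.1, ha.2, hτ⟩
      have hcomm : τ * ρ = ρ * τ := Subgroup.mem_centralizer_iff.mp hρ τ hmem
      have h1 : τ i = j := (hτ i j hadj.ne).mpr ⟨hadj, hcol⟩
      have h2 : τ (ρ i) = ρ j := by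
        have := congrArg (fun p : Equiv.Perm V => p i) hcomm
        simpa [Equiv.Perm.mul_apply, h1] using this
      have hne : ρ i ≠ ρ j := fun h => hadj.ne (ρ.injective h)
      exact (hτ (ρ i) (ρ j) hne).mp h2
    intro i j a
    constructor
    · rintro ⟨hadj, hcol⟩
      exact key σ hσ i j a hadj hcol
    · rintro ⟨hadj, hcol⟩
      have hinv : σ⁻¹ ∈ Subgroup.centralizer (coloringGroup G k κ : Set (Equiv.Perm V)) :=
        inv_mem hσ
      have := key σ⁻¹ hinv (σ i) (σ j) a hadj hcol
      simpa using this
  · intro hσ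
    rw [Subgroup.mem_centralizer_iff]
    intro τ hτmem
    have : τ ∈ Subgroup.centralizer ({σ} : Set (Equiv.Perm V)) := by
      refine Subgroup.closure_le (Subgroup.centralizer {σ}) |>.mpr ?_ hτmem
      rintro τ' ⟨a, _, _, hτ'⟩
      rw [SetLike.mem_coe, Subgroup.mem_centralizer_iff]
      intro s hs
      rw [Set.mem_singleton_iff] at hs
      subst hs
      ext v
      show s (τ' v) = τ' (s v)
      by_cases hv : τ' v = v
      · rw [hv]
        by_contra hne
        have hne' : τ' (s v) ≠ s v := fun h => hne h.symm
        obtain ⟨hadj, hcol⟩ := (hτ' (s v) (τ' (s v)) (Ne.symm hne')).mp rfl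
        set w := τ' (s v)
        have hw : w = s (s⁻¹ w) := (s.apply_symm_apply w).symm
        rw [hw] at hadj hcol
        obtain ⟨hadj2, hcol2⟩ := (hσ v (s⁻¹ w) a).mpr ⟨hadj, hcol⟩
        have : τ' v = s⁻¹ w := (hτ' v (s⁻¹ w) hadj2.ne).mpr ⟨hadj2, hcol2⟩
        rw [hv] at this
        exact hne' (by rw [this]; exact hw)
      · have hne : v ≠ τ' v := fun h => hv h.symm
        obtain ⟨hadj, hcol⟩ := (hτ' v (τ' v) hne).mp rfl
        obtain ⟨hadj2, hcol2⟩ := (hσ v (τ' v) a).mp ⟨hadj, hcol⟩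
        exact ((hτ' (s v) (s (τ' v)) hadj2.ne).mpr ⟨hadj2, hcol2⟩).symm
    have hc := Subgroup.mem_centralizer_iff.mp this σ rfl
    exact hc.symm
end

section
/- Let (G,κ) be a proper edge coloring of a finite simple graph. The coloring group 𝔊_κ is imprimitive if and only if there exists an imprimitive vertex coloring of G with respect to κ, i.e. a map ν : V(G) → {1,…,ℓ} such that: (i) whenever an edge colored b joins a vertex with ν-color a to a vertex with ν-color c with a ≠ c, every vertex with ν-color a is joined by an edge colored b to some vertex with ν-color c; and (ii) some ν-color class has size strictly greater than 1 and strictly less than |V(G)|. -/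
open scoped Classical

/-- A subgroup `H ≤ Sym(X)` is imprimitive if there is an `H`-invariant partition of `X`
(encoded as an `H`-invariant equivalence relation) having a block of size strictly
between `1` and `|X|`. -/
def Imprimitive {X : Type*} [Fintype X] (H : Subgroup (Equiv.Perm X)) : Prop :=
  ∃ r : X → X → Prop, Equivalence r ∧
    (∀ g ∈ H, ∀ x y : X, r x y → r (g x) (g y)) ∧
    ∃ x : X, 1 < {y | r x y}.ncard ∧ {y | r x y}.ncard < Fintype.card X

/-!
A partition of `V` into blocks is encoded by a vertex coloring `ν`, the blocks being its color
classes. Each generator `τ_b` of `𝔊_κ` swaps the endpoints of the `b`-colored edges, so `τ_b`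
maps blocks to blocks exactly when condition (i) holds for the color `b`: if one vertex of the
class `a` leaves it along a `b`-edge towards the class `c`, then every vertex of `a` must be
sent into `c` as well, i.e. must have a `b`-edge into `c`. Since the `τ_b` are involutions, the
block system is invariant under the whole group as soon as it is invariant under the generators.
-/

/-- Condition (i) in the paper's definition of an imprimitive vertex coloring. -/
def IsCompatibleVertexColoring {V : Type*} (G : SimpleGraph V) (κ : Sym2 V → ℕ) (ν : V → ℕ) :
    Prop :=
  ∀ u v : V, ∀ b : ℕ, G.Adj u v → κ s(u, v) = b → ν u ≠ ν v →
    ∀ w : V, ν w = ν u → ∃ x : V, G.Adj w x ∧ κ s(w, x) = b ∧ ν x = ν v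

section Labeling

variable {X : Type*} [Fintype X]

theorem Equivalence.exists_labeling {r : X → X → Prop} (hr : Equivalence r) :
    ∃ (ℓ : ℕ) (ν : X → ℕ), (∀ x, ν x ∈ Finset.Icc 1 ℓ) ∧ ∀ x y, ν x = ν y ↔ r x y := by
  let s : Setoid X := ⟨r, hr⟩
  let e := Fintype.equivFin (Quotient s)
  refine ⟨Fintype.card (Quotient s), fun x => (e (Quotient.mk s x) : ℕ) + 1, fun x => ?_, fun x y => ?_⟩
  · rw [Finset.mem_Icc]
    exact ⟨Nat.le_add_left 1 _, (e (Quotient.mk s x)).is_lt⟩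
  · simp only [add_left_inj, Fin.val_inj, e.apply_eq_iff_eq, Quotient.eq]
    rfl

theorem imprimitive_iff_exists_labeling (H : Subgroup (Equiv.Perm X)) :
    Imprimitive H ↔
      ∃ (ℓ : ℕ) (ν : X → ℕ), (∀ x, ν x ∈ Finset.Icc 1 ℓ) ∧
        (∀ g ∈ H, ∀ x y, ν x = ν y → ν (g x) = ν (g y)) ∧
        ∃ a : ℕ, 1 < {x | ν x = a}.ncard ∧ {x | ν x = a}.ncard < Fintype.card X := by
  constructor
  · rintro ⟨r, hr, hinv, x₀, hlt, hgt⟩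
    obtain ⟨ℓ, ν, hν, hνr⟩ := hr.exists_labeling
    have hblock : {x | ν x = ν x₀} = {y | r x₀ y} := by
      ext x
      exact (hνr x x₀).trans ⟨hr.symm, hr.symm⟩
    refine ⟨ℓ, ν, hν, fun g hg x y hxy => ?_, ν x₀, hblock ▸ hlt, hblock ▸ hgt⟩
    exact (hνr _ _).mpr (hinv g hg x y ((hνr x y).mp hxy))
  · rintro ⟨-, ν, -, hinv, a, hlt, hgt⟩
    obtain ⟨x₀, rfl⟩ : ∃ x₀, ν x₀ = a := by
      by_contra! h
      simp [h] at hlt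
    have hblock : {y | ν x₀ = ν y} = {x | ν x = ν x₀} := by
      ext y
      exact eq_comm
    exact ⟨fun x y => ν x = ν y, ⟨fun _ => rfl, Eq.symm, Eq.trans⟩, hinv, x₀,
      hblock ▸ hlt, hblock ▸ hgt⟩

end Labeling

namespace IsToggle

variable {V : Type*} {G : SimpleGraph V} {κ : Sym2 V → ℕ} {a : ℕ} {τ : Equiv.Perm V}

theorem apply_eq_of_adj (h : IsToggle G κ a τ) {v w : V} (hadj : G.Adj v w)
    (hcol : κ s(v, w) = a) : τ v = w :=
  (h v w hadj.ne).mpr ⟨hadj, hcol⟩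

theorem adj_apply (h : IsToggle G κ a τ) {v : V} (hv : τ v ≠ v) :
    G.Adj v (τ v) ∧ κ s(v, τ v) = a :=
  (h v (τ v) hv.symm).mp rfl

theorem apply_apply (h : IsToggle G κ a τ) (v : V) : τ (τ v) = v := by
  by_cases hv : τ v = v
  · rw [hv, hv]
  · obtain ⟨hadj, hcol⟩ := h.adj_apply hv
    exact h.apply_eq_of_adj hadj.symm (by rwa [Sym2.eq_swap])

theorem inv_apply (h : IsToggle G κ a τ) (v : V) : τ⁻¹ v = τ v :=
  Equiv.Perm.inv_eq_iff_eq.mpr (h.apply_apply v).symm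

theorem map_eq_map_of_compatible (h : IsToggle G κ a τ) {ν : V → ℕ}
    (hν : IsCompatibleVertexColoring G κ ν) {x y : V} (hxy : ν x = ν y) :
    ν (τ x) = ν (τ y) := by
  suffices key : ∀ x y, ν x = ν y → ν (τ x) ≠ ν x → ν (τ x) = ν (τ y) by
    by_cases hx : ν (τ x) = ν x
    · by_cases hy : ν (τ y) = ν y
      · rw [hx, hy, hxy]
      · exact (key y x hxy.symm hy).symm
    · exact key x y hxy hx
  intro x y hxy hx
  obtain ⟨hadj, hcol⟩ := h.adj_apply fun hfix => hx (congrArg ν hfix)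
  obtain ⟨y', hadj', hcol', hy'⟩ := hν x (τ x) a hadj hcol (Ne.symm hx) y hxy.symm
  rw [h.apply_eq_of_adj hadj' hcol', hy']

end IsToggle

theorem exists_isToggle {V : Type*} {G : SimpleGraph V} {κ : Sym2 V → ℕ}
    (hproper : ∀ u v w : V, G.Adj u v → G.Adj u w → v ≠ w → κ s(u, v) ≠ κ s(u, w)) (a : ℕ) :
    ∃ τ : Equiv.Perm V, IsToggle G κ a τ := by
  let IsPartner (v w : V) : Prop := G.Adj v w ∧ κ s(v, w) = a
  have partner_symm {v w : V} (h : IsPartner v w) : IsPartner w v :=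
    ⟨h.1.symm, by rw [Sym2.eq_swap]; exact h.2⟩
  have partner_unique {v w w' : V} (h : IsPartner v w) (h' : IsPartner v w') : w = w' := by
    by_contra hne
    exact hproper v w w' h.1 h'.1 hne (h.2.trans h'.2.symm)
  let f (v : V) : V := if h : ∃ w, IsPartner v w then h.choose else v
  have f_spec {v w : V} (h : IsPartner v w) : f v = w := by
    have hex : ∃ w, IsPartner v w := ⟨w, h⟩
    simp only [f, dif_pos hex]
    exact partner_unique hex.choose_spec h
  have f_of_not {v : V} (h : ¬∃ w, IsPartner v w) : f v = v := dif_neg h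
  have hf : Function.Involutive f := by
    intro v
    by_cases h : ∃ w, IsPartner v w
    · obtain ⟨w, hw⟩ := h
      rw [f_spec hw, f_spec (partner_symm hw)]
    · rw [f_of_not h, f_of_not h]
  refine ⟨hf.toPerm f, fun v w hvw => ⟨fun hfv => ?_, f_spec⟩⟩
  by_cases h : ∃ w, IsPartner v w
  · obtain ⟨w', hw'⟩ := h
    change f v = w at hfv
    rwa [← hfv, f_spec hw']
  · exact absurd (hfv.symm.trans (f_of_not h)) hvw.symm

theorem coloringGroup_preserves_iff {V : Type*} {G : SimpleGraph V} {k : ℕ} {κ : Sym2 V → ℕ}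
    (hκ : IsProperEdgeColoring G k κ) (ν : V → ℕ) :
    (∀ g ∈ coloringGroup G k κ, ∀ x y, ν x = ν y → ν (g x) = ν (g y)) ↔
      IsCompatibleVertexColoring G κ ν := by
  constructor
  · intro hinv u v b hadj hcol hne w hw
    obtain ⟨hb₁, hbk⟩ := Finset.mem_Icc.mp (hcol ▸ hκ.1 s(u, v) hadj)
    obtain ⟨τ, hτ⟩ := exists_isToggle hκ.2.2 b
    have hτw : ν (τ w) = ν v := by
      rw [hinv τ (Subgroup.subset_closure ⟨b, hb₁, hbk, hτ⟩) w u hw, hτ.apply_eq_of_adj hadj hcol]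
    have hmoved : τ w ≠ w := fun hfix => hne (hw ▸ hfix ▸ hτw)
    exact ⟨τ w, (hτ.adj_apply hmoved).1, (hτ.adj_apply hmoved).2, hτw⟩
  · intro hν g hg
    induction hg using Subgroup.closure_induction'' with
    | mem τ hτ =>
      obtain ⟨b, -, -, hτ⟩ := hτ
      exact fun x y => hτ.map_eq_map_of_compatible hν
    | inv_mem τ hτ =>
      obtain ⟨b, -, -, hτ⟩ := hτ
      intro x y hxy
      rw [hτ.inv_apply, hτ.inv_apply]
      exact hτ.map_eq_map_of_compatible hν hxy
    | one => exact fun x y => id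
    | mul g h _ _ hg hh => exact fun x y hxy => hg _ _ (hh x y hxy)

/-- `𝔊_κ` is imprimitive iff `G` admits an imprimitive vertex coloring
with respect to `κ`: (i) whenever an edge colored `b` joins a vertex colored `a` to a
vertex colored `c ≠ a`, every vertex colored `a` is joined by an edge colored `b` to some
vertex colored `c`; (ii) some vertex-color class has size strictly between `1` and `|V|`. -/
theorem stmt_4 {V : Type*} [Fintype V] (G : SimpleGraph V) (k : ℕ) (κ : Sym2 V → ℕ)
    (hκ : IsProperEdgeColoring G k κ) :
    Imprimitive (coloringGroup G k κ) ↔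
      ∃ (ℓ : ℕ) (ν : V → ℕ),
        (∀ v : V, ν v ∈ Finset.Icc 1 ℓ) ∧
        (∀ u v : V, ∀ b : ℕ, G.Adj u v → κ s(u, v) = b → ν u ≠ ν v →
          ∀ w : V, ν w = ν u → ∃ x : V, G.Adj w x ∧ κ s(w, x) = b ∧ ν x = ν v) ∧
        (∃ a : ℕ, 1 < {v : V | ν v = a}.ncard ∧ {v : V | ν v = a}.ncard < Fintype.card V) := by
  simp only [imprimitive_iff_exists_labeling, coloringGroup_preserves_iff hκ]
  rfl
end

section
/- Let T be a tree on n ≥ 2 vertices, let e_1, e_2, …, e_{n−1} be a listing of its n−1 edges in any order, and for each i let t_i denote the transposition of the two endpoints of e_i. Then the product t_1 t_2 ⋯ t_{n−1} is an n-cycle, i.e. a cyclic permutation whose support is all of V(T). -/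
/-!
Adding the edges one at a time, we show that the cycles of the partial product of
transpositions are exactly the connected components of the forest formed by the edges used so
far. An edge of a forest joins two different components, and multiplying a permutation by the
transposition of two points in different cycles merges those two cycles and leaves the others
alone. For the whole tree there is a single component, so the product is one cycle through
every vertex.
-/

namespace Relation

variable {α : Type*}

/-- For an equivalence `r`, the equivalence obtained by merging the classes of `u` and `v`. -/
def mergeClasses (r : α → α → Prop) (u v x y : α) : Prop :=
  r x y ∨ (r x u ∧ r v y) ∨ (r x v ∧ r u y)

theorem equivalence_mergeClasses {r : α → α → Prop} (hr : Equivalence r) (u v : α) :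
    Equivalence (mergeClasses r u v) where
  refl x := .inl (hr.refl x)
  symm := by
    rintro x y (h | ⟨h₁, h₂⟩ | ⟨h₁, h₂⟩)
    · exact .inl (hr.symm h)
    · exact .inr (.inr ⟨hr.symm h₂, hr.symm h₁⟩)
    · exact .inr (.inl ⟨hr.symm h₂, hr.symm h₁⟩)
  trans := by
    have htrans : ∀ {a b c}, r a b → r b c → r a c := hr.trans
    have hsymm : ∀ {a b}, r a b → r b a := hr.symm
    unfold mergeClasses
    grind

theorem mergeClasses_le {r r' : α → α → Prop} (hr' : Equivalence r') (hle : r ≤ r') {u v : α}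
    (huv : r' u v) : mergeClasses r u v ≤ r' := by
  rintro x y (hxy | ⟨hxu, hvy⟩ | ⟨hxv, huy⟩)
  · exact hle _ _ hxy
  · exact hr'.trans (hle _ _ hxu) (hr'.trans huv (hle _ _ hvy))
  · exact hr'.trans (hle _ _ hxv) (hr'.trans (hr'.symm huv) (hle _ _ huy))

end Relation

namespace Equiv.Perm

variable {α : Type*} {σ : Perm α} {x y : α}

theorem SameCycle.rel_of_equivalence [Finite α] {r : α → α → Prop} (hr : Equivalence r)
    (hstep : ∀ z, r z (σ z)) (h : σ.SameCycle x y) : r x y := by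
  obtain ⟨n, rfl⟩ := h.exists_nat_pow_eq
  clear h
  induction n with
  | zero => exact hr.refl x
  | succ n ih => exact hr.trans ih (by rw [pow_succ', mul_apply]; exact hstep _)

theorem apply_ne_self_of_forall_sameCycle [Nontrivial α] (h : ∀ x y, σ.SameCycle x y) (x : α) :
    σ x ≠ x := fun hx =>
  have ⟨y, hy⟩ := exists_ne x
  hy ((h x y).eq_of_left hx).symm

theorem isCycle_of_forall_sameCycle [Nontrivial α] (h : ∀ x y, σ.SameCycle x y) : σ.IsCycle := by
  obtain ⟨x, -⟩ := exists_pair_ne α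
  exact ⟨x, apply_ne_self_of_forall_sameCycle h x, fun y _ => h x y⟩

theorem support_eq_univ_of_forall_sameCycle [Fintype α] [DecidableEq α] [Nontrivial α]
    (h : ∀ x y, σ.SameCycle x y) : σ.support = Finset.univ :=
  Finset.eq_univ_of_forall fun x => mem_support.2 (apply_ne_self_of_forall_sameCycle h x)

variable [Finite α] [DecidableEq α] {u v : α}

theorem sameCycle_swap_mul_of_not_sameCycle (h : ¬σ.SameCycle u v) :
    (swap u v * σ).SameCycle u v := by
  set τ := swap u v * σ
  -- Along the `σ`-cycle of `v`, which avoids `u`, `τ` agrees with `σ` up to the predecessor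
  -- `σ.symm v` of `v`, and `τ` sends that one to `u`.
  have hwalk : ∀ n : ℕ, τ.SameCycle v ((σ ^ n) v) := by
    intro n
    induction n with
    | zero => exact .rfl
    | succ n ih =>
      rw [pow_succ', mul_apply]
      by_cases hv : σ ((σ ^ n) v) = v
      · rw [hv]
      have hu : σ ((σ ^ n) v) ≠ u := fun hu =>
        h (hu ▸ sameCycle_apply_right.2 (sameCycle_pow_right.2 .rfl)).symm
      refine ih.trans ⟨1, ?_⟩
      simp [τ, swap_apply_of_ne_of_ne hu hv]
  obtain ⟨n, hn⟩ := (SameCycle.refl σ v).symm_apply_right.exists_nat_pow_eq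
  have hu : τ (σ.symm v) = u := by simp [τ]
  exact (sameCycle_apply_right.2 (hn ▸ hwalk n) |>.trans (hu ▸ .rfl)).symm

theorem sameCycle_swap_mul_iff (h : ¬σ.SameCycle u v) :
    (swap u v * σ).SameCycle x y ↔ Relation.mergeClasses σ.SameCycle u v x y := by
  set τ := swap u v * σ
  constructor
  · refine SameCycle.rel_of_equivalence
      (Relation.equivalence_mergeClasses (SameCycle.equivalence σ) u v) fun z => ?_
    simp only [τ, mul_apply, swap_apply_def]
    split_ifs with hu hv
    · exact .inr (.inl ⟨hu ▸ sameCycle_apply_right.2 .rfl, .rfl⟩)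
    · exact .inr (.inr ⟨hv ▸ sameCycle_apply_right.2 .rfl, .rfl⟩)
    · exact .inl (sameCycle_apply_right.2 .rfl)
  · have huv : τ.SameCycle u v := sameCycle_swap_mul_of_not_sameCycle h
    have hswap : ∀ w, τ.SameCycle w (swap u v w) := fun w => by
      rw [swap_apply_def]
      split_ifs with hu hv
      · exact hu ▸ huv
      · exact hv ▸ huv.symm
      · exact .rfl
    refine Relation.mergeClasses_le (SameCycle.equivalence τ) (fun a b => ?_) huv x y
    refine SameCycle.rel_of_equivalence (SameCycle.equivalence τ) fun z => ?_
    simpa [τ] using (sameCycle_apply_right.2 (SameCycle.refl τ z)).trans (hswap (τ z))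

end Equiv.Perm

namespace SimpleGraph

variable {V : Type*}

theorem reachable_sup_edge_iff (G : SimpleGraph V) (u v x y : V) :
    (G ⊔ edge u v).Reachable x y ↔ Relation.mergeClasses G.Reachable u v x y := by
  constructor
  · rw [reachable_iff_reflTransGen]
    refine Relation.reflTransGen_le_of_equivalence_of_le
      (Relation.equivalence_mergeClasses G.reachable_is_equivalence u v) ?_ x y
    rintro a b (hab | hab)
    · exact .inl hab.reachable
    · obtain ⟨⟨rfl, rfl⟩ | ⟨rfl, rfl⟩, -⟩ := (edge_adj _ _ _ _).1 hab
      · exact .inr (.inl ⟨.rfl, .rfl⟩)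
      · exact .inr (.inr ⟨.rfl, .rfl⟩)
  · have huv : (G ⊔ edge u v).Reachable u v := by
      by_cases h : u = v
      · exact h ▸ .rfl
      · exact Adj.reachable (.inr (by simp [edge_adj, h]))
    exact Relation.mergeClasses_le (reachable_is_equivalence _)
      (fun a b hab => hab.mono le_sup_left) huv x y

def fromEdgeList (l : List (V × V)) : SimpleGraph V :=
  fromEdgeSet {e | e ∈ l.map fun p => s(p.1, p.2)}

theorem fromEdgeList_cons (p : V × V) (l : List (V × V)) :
    fromEdgeList (p :: l) = fromEdgeList l ⊔ edge p.1 p.2 := by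
  rw [fromEdgeList, fromEdgeList, edge, ← fromEdgeSet_union]
  congr 1
  ext e
  simp

end SimpleGraph

open Equiv SimpleGraph in
theorem Equiv.Perm.sameCycle_prod_swap_iff_reachable {V : Type*} [Finite V] [DecidableEq V]
    (l : List (V × V)) (hnodup : (l.map fun p => s(p.1, p.2)).Nodup)
    (hacyc : (fromEdgeList l).IsAcyclic) (x y : V) :
    (l.map fun p => swap p.1 p.2).prod.SameCycle x y ↔ (fromEdgeList l).Reachable x y := by
  induction l generalizing x y with
  | nil => simp [fromEdgeList]
  | cons p l ih =>
    obtain ⟨u, v⟩ := p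
    rw [List.map_cons, List.nodup_cons] at hnodup
    rw [fromEdgeList_cons] at hacyc ⊢
    obtain ⟨hacyc', hreach⟩ := isAcyclic_sup_fromEdgeSet_iff.1 hacyc
    have ih := ih hnodup.2 hacyc'
    rw [List.map_cons, List.prod_cons]
    by_cases huv : u = v
    · subst huv
      simpa [edge_self_eq_bot, ← Perm.one_def] using ih x y
    have hnreach : ¬(fromEdgeList l).Reachable u v := fun h =>
      (hreach h).elim huv fun hadj => hnodup.1 ((fromEdgeSet_adj _).1 hadj).1
    rw [sameCycle_swap_mul_iff (mt (ih u v).1 hnreach), reachable_sup_edge_iff]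
    simp only [Relation.mergeClasses, ih]

/-- If the edges of a tree on `n ≥ 2` vertices are listed in any order
(each edge exactly once, as a list of pairs of endpoints), then the product of the
corresponding transpositions is an `n`-cycle: a single cycle whose support is the whole
vertex set. -/
theorem stmt_5 {V : Type*} [Fintype V] [DecidableEq V] (G : SimpleGraph V)
    (hG : G.IsTree) (hn : 2 ≤ Fintype.card V) (l : List (V × V))
    (hnodup : (l.map fun p => s(p.1, p.2)).Nodup)
    (hall : ∀ e : Sym2 V, e ∈ l.map (fun p => s(p.1, p.2)) ↔ e ∈ G.edgeSet) :
    (l.map fun p => Equiv.swap p.1 p.2).prod.IsCycle ∧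
    (l.map fun p => Equiv.swap p.1 p.2).prod.support = Finset.univ := by
  have hl : SimpleGraph.fromEdgeList l = G := by
    rw [← G.fromEdgeSet_edgeSet, SimpleGraph.fromEdgeList]
    exact congrArg _ (Set.ext hall)
  have hsame (x y : V) : (l.map fun p => Equiv.swap p.1 p.2).prod.SameCycle x y :=
    (Equiv.Perm.sameCycle_prod_swap_iff_reachable l hnodup (hl ▸ hG.isAcyclic) x y).2
      (hl ▸ hG.connected.preconnected x y)
  have : Nontrivial V := Fintype.one_lt_card_iff_nontrivial.1 hn
  exact ⟨Equiv.Perm.isCycle_of_forall_sameCycle hsame,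
    Equiv.Perm.support_eq_univ_of_forall_sameCycle hsame⟩
end

section
/- Let G be a finite simple graph that is a disjoint union of trees (a forest), and let κ : E(G) → {1,…,k} be a proper edge coloring. Let π be any permutation of {1,…,k} and set σ = τ_{π(1)} τ_{π(2)} ⋯ τ_{π(k)}. Then every connected component T of G is mapped to itself by σ, and σ restricted to the vertex set of T is a single cycle of length |V(T)|. In particular, if G is a tree on n vertices, then any product of all the generators τ_1,…,τ_k, each appearing exactly once, in any order, is an n-cycle. -/
open scoped Classical

/-!
Induction on the number of edges. Delete an edge `uv` of colour `c` from the forest and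
replace `τ c` by `τ c * swap u v`, which is a toggle of the smaller forest. If
`l = l₁ ++ c :: l₂` and `P` is the product over `l₂`, the old product is the new one times
`swap (P⁻¹ u) (P⁻¹ v)`, and `P⁻¹ u`, `P⁻¹ v` lie in the components of `u` and `v` in the
smaller forest, since every toggle moves vertices along edges. As `uv` is a bridge, these
components are different cycles of the new product, and multiplying by a transposition of
points in two different cycles merges those cycles, just as putting `uv` back merges the two
components.
-/

open Equiv

-- For an equivalence relation `r`, the equivalence relation generated by `r` and `(a, b)`.
def mergeClasses {α : Type*} (r : α → α → Prop) (a b x y : α) : Prop :=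
  r x y ∨ r x a ∧ r b y ∨ r x b ∧ r a y

lemma mergeClasses_congr {α : Type*} {r : α → α → Prop} (hr : Equivalence r) {a a' b b' : α}
    (ha : r a a') (hb : r b b') : mergeClasses r a b = mergeClasses r a' b' := by
  have left {c c'} (hc : r c c') (x : α) : r x c ↔ r x c' :=
    ⟨(hr.trans · hc), (hr.trans · (hr.symm hc))⟩
  have right {c c'} (hc : r c c') (y : α) : r c y ↔ r c' y :=
    ⟨hr.trans (hr.symm hc), hr.trans hc⟩
  ext x y
  simp only [mergeClasses, left ha, left hb, right ha, right hb]

namespace Equiv.Perm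

variable {α : Type*} {f g : Perm α} {x y : α}

lemma SameCycle.induction_on [Finite α] {p : α → Prop} (h : f.SameCycle x y) (hx : p x)
    (hf : ∀ z, p z → p (f z)) : p y := by
  obtain ⟨n, rfl⟩ := h.exists_nat_pow_eq
  clear h
  induction n with
  | zero => exact hx
  | succ n ih => rw [pow_succ', mul_apply]; exact hf _ ih

lemma SameCycle.of_forall_sameCycle_apply [Finite α] (h : ∀ z, g.SameCycle z (f z))
    (hxy : f.SameCycle x y) : g.SameCycle x y :=
  hxy.induction_on .rfl fun z hz => hz.trans (h z)

variable [DecidableEq α] {a b : α}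

lemma sameCycle_mul_swap_of_not_sameCycle [Finite α] (hab : ¬ f.SameCycle a b) :
    (f * swap a b).SameCycle a b := by
  have hne (n : ℕ) : (f ^ n) b ≠ a := fun h => hab (h ▸ sameCycle_pow_right.2 .rfl).symm
  -- The `f`-orbit of `b` avoids `a`, and off `a` and `b` the product agrees with `f`.
  have first : (f * swap a b).SameCycle a (f b) := by
    simpa using sameCycle_apply_right.2 (SameCycle.refl (f * swap a b) a)
  have orbit (n : ℕ) : (f * swap a b).SameCycle a ((f ^ (n + 1)) b) := by
    induction n with
    | zero => simpa using first
    | succ n ih =>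
      rw [pow_succ', mul_apply]
      by_cases hb : (f ^ (n + 1)) b = b
      · rwa [hb]
      · have : (f * swap a b) ((f ^ (n + 1)) b) = f ((f ^ (n + 1)) b) := by
          rw [mul_apply, swap_apply_of_ne_of_ne (hne _) hb]
        exact this ▸ sameCycle_apply_right.2 ih
  have := orbit (orderOf f - 1)
  rwa [Nat.sub_add_cancel (orderOf_pos f), pow_orderOf_eq_one, one_apply] at this

lemma sameCycle_mul_swap_iff [Finite α] (hab : ¬ f.SameCycle a b) :
    (f * swap a b).SameCycle x y ↔ mergeClasses f.SameCycle a b x y := by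
  have hba : (f * swap a b).SameCycle a b := sameCycle_mul_swap_of_not_sameCycle hab
  constructor
  · refine fun h => h.induction_on (.inl .rfl) fun z hz => ?_
    rcases eq_or_ne z a with rfl | hza
    · simp only [mergeClasses, mul_apply, swap_apply_left, sameCycle_apply_right] at hz ⊢
      tauto
    rcases eq_or_ne z b with rfl | hzb
    · simp only [mergeClasses, mul_apply, swap_apply_right, sameCycle_apply_right] at hz ⊢
      tauto
    · simpa only [mergeClasses, mul_apply, swap_apply_of_ne_of_ne hza hzb, sameCycle_apply_right]
  · have step (z : α) : (f * swap a b).SameCycle z (f z) := by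
      rcases eq_or_ne z a with rfl | hza
      · simpa using sameCycle_apply_right.2 hba
      rcases eq_or_ne z b with rfl | hzb
      · simpa using sameCycle_apply_right.2 hba.symm
      · simpa [swap_apply_of_ne_of_ne hza hzb] using
          sameCycle_apply_right.2 (SameCycle.refl (f * swap a b) z)
    have hf {p q : α} (h : f.SameCycle p q) : (f * swap a b).SameCycle p q :=
      h.of_forall_sameCycle_apply step
    rintro (h | ⟨h₁, h₂⟩ | ⟨h₁, h₂⟩)
    · exact hf h
    · exact ((hf h₁).trans hba).trans (hf h₂)
    · exact ((hf h₁).trans hba.symm).trans (hf h₂)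

end Equiv.Perm

theorem List.prod_map_eq_prod_map_update_mul {ι M : Type*} [DecidableEq ι] [Group M]
    {l₁ l₂ : List ι} {c : ι} (hl : (l₁ ++ c :: l₂).Nodup) (τ : ι → M) (g : M) :
    ((l₁ ++ c :: l₂).map τ).prod =
      ((l₁ ++ c :: l₂).map (Function.update τ c g)).prod *
        ((l₂.map τ).prod⁻¹ * (g⁻¹ * τ c) * (l₂.map τ).prod) := by
  have hc : c ∉ l₁ ++ l₂ := (List.nodup_cons.1 (List.nodup_middle.1 hl)).1
  have hupdate {l : List ι} (hsub : l ⊆ l₁ ++ l₂) :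
      l.map (Function.update τ c g) = l.map τ :=
    List.map_congr_left fun a ha =>
      Function.update_of_ne (fun h : a = c => hc (h ▸ hsub ha)) _ _
  simp only [List.map_append, List.map_cons, List.prod_append, List.prod_cons,
    hupdate (List.subset_append_left l₁ l₂), hupdate (List.subset_append_right l₁ l₂),
    Function.update_self]
  group

namespace SimpleGraph

variable {V : Type*} {G : SimpleGraph V} {u v x y : V}

lemma reachable_iff_mergeClasses_deleteEdges (huv : G.Adj u v) :
    G.Reachable x y ↔ mergeClasses (G.deleteEdges {s(u, v)}).Reachable u v x y := by
  set G' := G.deleteEdges {s(u, v)}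
  have hle : G' ≤ G := deleteEdges_le _
  constructor
  · rintro ⟨p⟩
    induction p with
    | nil => exact .inl .rfl
    | @cons a b _ hab _ ih =>
      have hu : G'.Reachable u u := .rfl
      have hv : G'.Reachable v v := .rfl
      by_cases he : s(a, b) = s(u, v)
      · rcases Sym2.eq_iff.1 he with ⟨rfl, rfl⟩ | ⟨rfl, rfl⟩ <;>
          simp only [mergeClasses] at ih ⊢ <;> tauto
      · have hab' : G'.Reachable a b := (deleteEdges_adj.2 ⟨hab, he⟩).reachable
        rcases ih with h | ⟨h₁, h₂⟩ | ⟨h₁, h₂⟩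
        · exact .inl (hab'.trans h)
        · exact .inr (.inl ⟨hab'.trans h₁, h₂⟩)
        · exact .inr (.inr ⟨hab'.trans h₁, h₂⟩)
  · rintro (h | ⟨h₁, h₂⟩ | ⟨h₁, h₂⟩)
    · exact h.mono hle
    · exact (h₁.mono hle).trans (huv.reachable.trans (h₂.mono hle))
    · exact (h₁.mono hle).trans (huv.symm.reachable.trans (h₂.mono hle))

lemma reachable_list_prod_apply {L : List (Perm V)} (h : ∀ π ∈ L, ∀ v, G.Reachable v (π v))
    (v : V) : G.Reachable v (L.prod v) := by
  induction L generalizing v with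
  | nil => rfl
  | cons π L ih =>
    rw [List.prod_cons, Perm.mul_apply]
    exact (ih (fun ρ hρ => h ρ (List.mem_cons_of_mem _ hρ)) v).trans (h π List.mem_cons_self _)

end SimpleGraph

section Toggle

variable {V : Type*} {G : SimpleGraph V} {κ : Sym2 V → ℕ} {a : ℕ} {τ : Perm V} {u v : V}

lemma IsToggle.reachable_apply (h : IsToggle G κ a τ) (v : V) : G.Reachable v (τ v) := by
  by_cases hv : τ v = v
  · rw [hv]
  · exact ((h v (τ v) (Ne.symm hv)).1 rfl).1.reachable

lemma IsToggle.eq_one (h : IsToggle ⊥ κ a τ) : τ = 1 := by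
  ext v
  by_contra hv
  exact ((h v (τ v) (Ne.symm hv)).1 rfl).1

lemma IsToggle.deleteEdges_of_ne (h : IsToggle G κ a τ) (ha : κ s(u, v) ≠ a) :
    IsToggle (G.deleteEdges {s(u, v)}) κ a τ := by
  intro x y hxy
  rw [h x y hxy, SimpleGraph.deleteEdges_adj, Set.mem_singleton_iff]
  exact ⟨fun ⟨hadj, hc⟩ => ⟨⟨hadj, fun he => ha (he ▸ hc)⟩, hc⟩,
    fun ⟨⟨hadj, _⟩, hc⟩ => ⟨hadj, hc⟩⟩

lemma IsToggle.deleteEdges_mul_swap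
    (hκ : ∀ u v w : V, G.Adj u v → G.Adj u w → v ≠ w → κ s(u, v) ≠ κ s(u, w))
    (huv : G.Adj u v) (h : IsToggle G κ (κ s(u, v)) τ) :
    IsToggle (G.deleteEdges {s(u, v)}) κ (κ s(u, v)) (τ * swap u v) := by
  intro x y hxy
  rw [SimpleGraph.deleteEdges_adj, Set.mem_singleton_iff]
  by_cases hx : x = u ∨ x = v
  · have hfix : (τ * swap u v) x = x := by
      rcases hx with rfl | rfl
      · simpa using (h v x huv.ne.symm).2 ⟨huv.symm, by rw [Sym2.eq_swap]⟩
      · simpa using (h u x huv.ne).2 ⟨huv, rfl⟩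
    rw [hfix, iff_false_intro hxy, false_iff]
    rintro ⟨⟨hxy', hne⟩, hc⟩
    rcases hx with rfl | rfl
    · exact hκ x v y huv hxy' (fun hvy => hne (hvy ▸ rfl)) hc.symm
    · exact hκ x u y huv.symm hxy' (fun huy => hne (huy ▸ Sym2.eq_swap))
        (by rw [Sym2.eq_swap, hc])
  · push Not at hx
    have : s(x, y) ≠ s(u, v) := by simp [hx.1, hx.2]
    rw [Perm.mul_apply, swap_apply_of_ne_of_ne hx.1 hx.2, h x y hxy]
    simp [this]

lemma IsToggle.update_deleteEdges
    (hκ : ∀ u v w : V, G.Adj u v → G.Adj u w → v ≠ w → κ s(u, v) ≠ κ s(u, w))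
    (huv : G.Adj u v) {τ : ℕ → Perm V} (h : IsToggle G κ a (τ a)) :
    IsToggle (G.deleteEdges {s(u, v)}) κ a
      (Function.update τ (κ s(u, v)) (τ (κ s(u, v)) * swap u v) a) := by
  rcases eq_or_ne a (κ s(u, v)) with rfl | ha
  · rw [Function.update_self]
    exact h.deleteEdges_mul_swap hκ huv
  · rw [Function.update_of_ne ha]
    exact h.deleteEdges_of_ne ha.symm

end Toggle

open SimpleGraph in
theorem sameCycle_prod_toggles_eq_reachable {V : Type*} [Finite V] {G : SimpleGraph V}
    (hG : G.IsAcyclic) {κ : Sym2 V → ℕ}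
    (hκ : ∀ u v w : V, G.Adj u v → G.Adj u w → v ≠ w → κ s(u, v) ≠ κ s(u, w))
    {l : List ℕ} (hl : l.Nodup) (hcolors : ∀ e ∈ G.edgeSet, κ e ∈ l)
    {τ : ℕ → Perm V} (hτ : ∀ a ∈ l, IsToggle G κ a (τ a)) :
    (l.map τ).prod.SameCycle = G.Reachable := by
  obtain ⟨n, hn⟩ : ∃ n, G.edgeSet.ncard = n := ⟨_, rfl⟩
  induction n generalizing G τ with
  | zero =>
    obtain rfl : G = ⊥ := edgeSet_eq_empty.1 ((Set.ncard_eq_zero).1 hn)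
    rw [List.prod_eq_one (by simpa using fun a ha => (hτ a ha).eq_one)]
    ext x y
    rw [Perm.sameCycle_one, reachable_bot]
  | succ n ih =>
    obtain ⟨⟨u, v⟩, he⟩ := Set.nonempty_of_ncard_ne_zero (hn.trans_ne n.succ_ne_zero)
    have huv : G.Adj u v := he
    set G' := G.deleteEdges {s(u, v)}
    set c := κ s(u, v)
    set τ' := Function.update τ c (τ c * swap u v)
    have hτ' (a : ℕ) (ha : a ∈ l) : IsToggle G' κ a (τ' a) :=
      (hτ a ha).update_deleteEdges hκ huv
    have IH : (l.map τ').prod.SameCycle = G'.Reachable := by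
      refine ih (hG.anti (deleteEdges_le _))
        (fun x y z hxy hxz => hκ x y z (deleteEdges_le _ hxy) (deleteEdges_le _ hxz))
        (fun e he => hcolors e (edgeSet_subset_edgeSet.2 (deleteEdges_le _) he)) hτ' ?_
      rw [edgeSet_deleteEdges, Set.ncard_sdiff_singleton_of_mem he, hn, Nat.add_sub_cancel]
    have hbridge : ¬ G'.Reachable u v := isBridge_iff.1 (isAcyclic_iff_forall_isBridge.1 hG he)
    obtain ⟨l₁, l₂, rfl⟩ := List.append_of_mem (hcolors _ he)
    set P := (l₂.map τ).prod
    have hP (w : V) : G'.Reachable (P⁻¹ w) w := by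
      have hc : c ∉ l₂ := fun h =>
        (List.nodup_cons.1 (List.nodup_middle.1 hl)).1 (List.mem_append_right _ h)
      have hl₂ (a : ℕ) (ha : a ∈ l₂) : IsToggle G' κ a (τ a) := by
        simpa [τ', Function.update_of_ne (ne_of_mem_of_not_mem ha hc)] using
          hτ' a (by simp [ha])
      simpa [P] using reachable_list_prod_apply (L := l₂.map τ)
        (by simpa using fun a ha => (hl₂ a ha).reachable_apply) (P⁻¹ w)
    have hσ : ((l₁ ++ c :: l₂).map τ).prod =
        ((l₁ ++ c :: l₂).map τ').prod * swap (P⁻¹ u) (P⁻¹ v) := by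
      rw [List.prod_map_eq_prod_map_update_mul hl τ (τ c * swap u v), mul_inv_rev,
        inv_mul_cancel_right, swap_inv, swap_apply_apply, inv_inv]
    have hsep : ¬ ((l₁ ++ c :: l₂).map τ').prod.SameCycle (P⁻¹ u) (P⁻¹ v) := by
      rw [IH]
      exact fun h => hbridge (((hP u).symm.trans h).trans (hP v))
    rw [hσ]
    ext x y
    rw [Perm.sameCycle_mul_swap_iff hsep, IH,
      mergeClasses_congr G'.reachable_is_equivalence (hP u) (hP v),
      ← reachable_iff_mergeClasses_deleteEdges huv]

/-- Let `G` be a forest with a proper edge coloring by colors `1, …, k`,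
with toggle permutations `τ a` for each color, and let `σ` be the product of all the
`τ a` for `a ∈ {1, …, k}`, each appearing exactly once, in any order (encoded by a
duplicate-free list `l` whose elements are exactly `{1, …, k}`). Then `σ` maps every
connected component to itself, and on each component it is a single cycle covering the
whole component: two vertices are in the same cycle of `σ` iff they are in the same
component. In particular if `G` is a tree on `n` vertices, `σ` is an `n`-cycle. -/
theorem stmt_6 {V : Type*} [Fintype V] (G : SimpleGraph V) (hG : G.IsAcyclic)
    (k : ℕ) (κ : Sym2 V → ℕ) (hκ : IsProperEdgeColoring G k κ)
    (τ : ℕ → Equiv.Perm V) (hτ : ∀ a ∈ Finset.Icc 1 k, IsToggle G κ a (τ a))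
    (l : List ℕ) (hnd : l.Nodup) (hcolors : l.toFinset = Finset.Icc 1 k) :
    (∀ v : V, G.Reachable v ((l.map τ).prod v)) ∧
    (∀ v w : V, ((l.map τ).prod).SameCycle v w ↔ G.Reachable v w) := by
  have hτl (a : ℕ) (ha : a ∈ l) : IsToggle G κ a (τ a) :=
    hτ a (hcolors ▸ List.mem_toFinset.2 ha)
  refine ⟨SimpleGraph.reachable_list_prod_apply
    (by simpa using fun a ha => (hτl a ha).reachable_apply), fun v w => ?_⟩
  rw [sameCycle_prod_toggles_eq_reachable hG hκ.2.2 hnd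
    (fun e he => List.mem_toFinset.1 (hcolors ▸ hκ.1 e he)) hτl]
end

section
/- Let (G,κ) be a proper edge coloring of a tree with n vertices that uses at least 3 colors. Then |𝔊_κ| · (n − φ(n)) ≥ n², where φ denotes Euler's totient function. -/
open scoped Classical

/-!
The product `σ = τ_1 ⋯ τ_k` uses the transposition of every edge of the tree exactly once; each
edge is a bridge, so each transposition merges two cycles and `σ` is an `n`-cycle. Hence
`C = ⟨σ⟩ ≤ 𝔊_κ` acts simply transitively on the vertices. For a smallest colour class `a`, the
toggle `t = τ_a ≠ 1` moves at most `2(n - 1)/k < 2n/3` vertices, so it fixes more than `n/3`.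
Let `p` be the least prime factor of `n`.

If `t` does not normalize `C`, then `C ∩ tCt⁻¹` has index at least `p` in `C`, so `C` meets at
least `p` cosets of `tCt⁻¹` and `|𝔊_κ| ≥ np`. If `t` normalizes `C`, the fixed points of `t`
correspond to the centralizer of `t` in `C`, so their number divides `n`; lying strictly between
`n/3` and `n`, it is `n/2`. Then `p = 2`, and `t ∉ C` (it is not the identity but has a fixed
point) gives `|𝔊_κ| ≥ 2n`. Finally `n - φ(n) ≥ n/p`, as no multiple of `p` is coprime to `n`.
-/

open Equiv Equiv.Perm SimpleGraph Finset

namespace Equiv.Perm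

variable {V : Type*}

theorem SameCycle.rel_of_forall_rel_apply {r : V → V → Prop} (hr : Equivalence r) {P : Perm V}
    (hP : ∀ a, r a (P a)) {a b : V} (hab : P.SameCycle a b) : r a b := by
  obtain ⟨i, rfl⟩ := hab
  induction i using Int.induction_on with
  | zero => exact hr.refl a
  | succ i ih => rw [add_comm, zpow_add, zpow_one, mul_apply]; exact hr.trans ih (hP _)
  | pred i ih =>
    rw [sub_eq_neg_add, zpow_add, zpow_neg_one, mul_apply]
    refine hr.trans ih (hr.symm ?_)
    simpa using hP (P⁻¹ ((P ^ (-(i : ℤ))) a))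

variable [DecidableEq V] [Finite V]

/- `(swap x y * P) ^ j` agrees with `P ^ j` at `x` until the `P`-orbit of `x` first returns to
`x`; at that step the swap sends it to `y` instead. -/
theorem sameCycle_swap_mul_of_not_sameCycle_s8 {P : Perm V} {x y : V} (h : ¬ P.SameCycle x y) :
    (swap x y * P).SameCycle x y := by
  have hret : ∃ m, 0 < m ∧ (P ^ m) x = x :=
    ⟨orderOf P, orderOf_pos P, by rw [pow_orderOf_eq_one]; rfl⟩
  obtain ⟨hpos, hret_x⟩ := Nat.find_spec hret
  have hagree : ∀ j < Nat.find hret, ((swap x y * P) ^ j) x = (P ^ j) x := by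
    intro j
    induction j with
    | zero => simp
    | succ j ih =>
      intro hj
      rw [pow_succ', mul_apply, ih (by omega), mul_apply, ← mul_apply P, ← pow_succ']
      refine swap_apply_of_ne_of_ne (fun hx => Nat.find_min hret hj ⟨j.succ_pos, hx⟩) ?_
      exact fun hy => h ⟨(j + 1 : ℕ), by rwa [zpow_natCast]⟩
  obtain ⟨m, hm⟩ := Nat.exists_eq_add_one_of_ne_zero hpos.ne'
  refine ⟨(Nat.find hret : ℕ), ?_⟩
  rw [zpow_natCast, hm, pow_succ', mul_apply, hagree m (by omega), mul_apply, ← mul_apply P,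
    ← pow_succ', ← hm, hret_x, swap_apply_left]

theorem SameCycle.swap_mul_of_not_sameCycle {P : Perm V} {x y : V} (h : ¬ P.SameCycle x y)
    {a b : V} (hab : P.SameCycle a b) : (swap x y * P).SameCycle a b := by
  have hxy := sameCycle_swap_mul_of_not_sameCycle_s8 h
  refine hab.rel_of_forall_rel_apply (SameCycle.equivalence _) fun c => ?_
  have hstep : (swap x y * P).SameCycle c (swap x y (P c)) := ⟨1, by simp⟩
  rcases eq_or_ne (P c) x with hx | hx
  · rw [hx, swap_apply_left] at hstep; rw [hx]; exact hstep.trans hxy.symm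
  rcases eq_or_ne (P c) y with hy | hy
  · rw [hy, swap_apply_right] at hstep; rw [hy]; exact hstep.trans hxy
  · rwa [swap_apply_of_ne_of_ne hx hy] at hstep

end Equiv.Perm

theorem SimpleGraph.Reachable.rel_of_forall_adj {V : Type*} {G : SimpleGraph V}
    {r : V → V → Prop} (hr : Equivalence r) (hG : ∀ u v, G.Adj u v → r u v) {a b : V}
    (hab : G.Reachable a b) : r a b := by
  obtain ⟨p⟩ := hab
  induction p with
  | nil => exact hr.refl _
  | cons h _ ih => exact hr.trans (hG _ _ h) ih

section SwapProd

variable {V : Type*} [DecidableEq V]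

def edgeSwap : Sym2 V → Perm V := Sym2.lift ⟨swap, swap_comm⟩

@[simp] theorem edgeSwap_mk (x y : V) : edgeSwap s(x, y) = swap x y := rfl

theorem edgeSwap_apply_of_notMem {e : Sym2 V} {u : V} (hu : u ∉ e) : edgeSwap e u = u := by
  induction e using Sym2.inductionOn with
  | _ x y =>
    have hxy : u ≠ x ∧ u ≠ y := by simpa using hu
    exact swap_apply_of_ne_of_ne hxy.1 hxy.2

def swapProd (l : List (Sym2 V)) : Perm V := (l.map edgeSwap).prod

@[simp] theorem swapProd_cons (e : Sym2 V) (l : List (Sym2 V)) :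
    swapProd (e :: l) = edgeSwap e * swapProd l := List.prod_cons

theorem reachable_edgeSwap_apply {S : Set (Sym2 V)} {e : Sym2 V} (he : e ∈ S) (u : V) :
    (fromEdgeSet S).Reachable u (edgeSwap e u) := by
  induction e using Sym2.inductionOn with
  | _ x y =>
    rw [edgeSwap_mk, swap_apply_def]
    split_ifs with hx hy
    · subst hx
      by_cases hxy : u = y
      · rw [hxy]
      · exact Adj.reachable ((fromEdgeSet_adj _).mpr ⟨he, hxy⟩)
    · subst hy
      by_cases hxy : u = x
      · rw [hxy]
      · exact Adj.reachable ((fromEdgeSet_adj _).mpr ⟨Sym2.eq_swap ▸ he, hxy⟩)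
    · rfl

theorem reachable_swapProd_apply (l : List (Sym2 V)) (u : V) :
    (fromEdgeSet {e | e ∈ l}).Reachable u (swapProd l u) := by
  induction l with
  | nil => rfl
  | cons e l ih =>
    rw [swapProd_cons, mul_apply]
    have hmono : fromEdgeSet {f | f ∈ l} ≤ fromEdgeSet {f | f ∈ e :: l} :=
      fromEdgeSet_mono fun f hf => List.mem_cons_of_mem e hf
    exact (ih.mono hmono).trans (reachable_edgeSwap_apply List.mem_cons_self _)

theorem reachable_of_sameCycle_swapProd (l : List (Sym2 V)) {a b : V}
    (h : (swapProd l).SameCycle a b) : (fromEdgeSet {e | e ∈ l}).Reachable a b :=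
  h.rel_of_forall_rel_apply (reachable_is_equivalence _) (reachable_swapProd_apply l)

/- Each edge of a forest is a bridge, so its endpoints lie in different cycles of the product of
the transpositions of the other edges, and its own transposition merges those two cycles. -/
theorem sameCycle_swapProd_of_reachable [Finite V] {G : SimpleGraph V} (hG : G.IsAcyclic)
    {l : List (Sym2 V)} (hl : l.Nodup) (hlG : ∀ e ∈ l, e ∈ G.edgeSet) {a b : V}
    (h : (fromEdgeSet {e | e ∈ l}).Reachable a b) : (swapProd l).SameCycle a b := by
  induction l generalizing a b with
  | nil => exact h.rel_of_forall_adj (SameCycle.equivalence _) fun u v huv => by simp at huv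
  | cons e l ih =>
    induction e using Sym2.inductionOn with
    | _ x y =>
    obtain ⟨hxy_l, hl⟩ := List.nodup_cons.mp hl
    have hxyG : G.Adj x y := hlG _ List.mem_cons_self
    have hlG' : ∀ e ∈ l, e ∈ G.edgeSet := fun e he => hlG e (List.mem_cons_of_mem _ he)
    have hsplit : ¬ (swapProd l).SameCycle x y := by
      intro hc
      refine isAcyclic_iff_forall_adj_isBridge.mp hG hxyG
        ((reachable_of_sameCycle_swapProd l hc).mono ?_)
      intro u v huv
      obtain ⟨huv, hne⟩ := (fromEdgeSet_adj _).mp huv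
      exact deleteEdges_adj.mpr
        ⟨hlG' _ huv, fun h => hxy_l (Set.mem_singleton_iff.mp h ▸ huv)⟩
    rw [swapProd_cons, edgeSwap_mk]
    refine h.rel_of_forall_adj (SameCycle.equivalence _) fun u v huv => ?_
    obtain ⟨huv, hne⟩ := (fromEdgeSet_adj _).mp huv
    rcases List.mem_cons.mp huv with huv | huv
    · rcases Sym2.eq_iff.mp huv with ⟨rfl, rfl⟩ | ⟨rfl, rfl⟩
      · exact sameCycle_swap_mul_of_not_sameCycle_s8 hsplit
      · exact (sameCycle_swap_mul_of_not_sameCycle_s8 hsplit).symm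
    · exact (ih hl hlG' ((fromEdgeSet_adj _).mpr ⟨huv, hne⟩).reachable).swap_mul_of_not_sameCycle
        hsplit
theorem swapProd_apply_of_forall_notMem {l : List (Sym2 V)} {v : V} (hv : ∀ e ∈ l, v ∉ e) :
    swapProd l v = v := by
  induction l with
  | nil => rfl
  | cons e l ih =>
    rw [swapProd_cons, mul_apply, ih fun f hf => hv f (List.mem_cons_of_mem _ hf),
      edgeSwap_apply_of_notMem (hv e List.mem_cons_self)]

theorem swapProd_apply_of_mem {l : List (Sym2 V)} (hl : l.Pairwise fun e f => ∀ u ∈ e, u ∉ f)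
    {v w : V} (h : s(v, w) ∈ l) : swapProd l v = w := by
  induction l with
  | nil => simp at h
  | cons e l ih =>
    obtain ⟨he, hl⟩ := List.pairwise_cons.mp hl
    rw [swapProd_cons, mul_apply]
    rcases List.mem_cons.mp h with rfl | h
    · rw [swapProd_apply_of_forall_notMem fun f hf => he f hf v (Sym2.mem_mk_left v w),
        edgeSwap_mk, swap_apply_left]
    · have hw : w ∉ e := fun hw => he _ h w hw (Sym2.mem_mk_right v w)
      rw [ih hl h, edgeSwap_apply_of_notMem hw]

theorem swapProd_apply_eq_iff {l : List (Sym2 V)} (hl : l.Pairwise fun e f => ∀ u ∈ e, u ∉ f)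
    {v w : V} (hvw : v ≠ w) : swapProd l v = w ↔ s(v, w) ∈ l := by
  refine ⟨fun h => ?_, swapProd_apply_of_mem hl⟩
  by_cases hv : ∀ e ∈ l, v ∉ e
  · exact absurd ((swapProd_apply_of_forall_notMem hv).symm.trans h) hvw
  push Not at hv
  obtain ⟨e, he, hve⟩ := hv
  obtain ⟨u, rfl⟩ := Sym2.mem_iff_exists.mp hve
  rwa [← h, swapProd_apply_of_mem hl he]

theorem card_support_swapProd_le [Fintype V] (l : List (Sym2 V)) :
    #(swapProd l).support ≤ 2 * l.length := by
  induction l with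
  | nil => simp [swapProd]
  | cons e l ih =>
    induction e using Sym2.inductionOn with
    | _ x y =>
    have hswap : #(swap x y).support ≤ 2 := by
      rcases eq_or_ne x y with rfl | hxy
      · simp
      · rw [card_support_swap hxy]
    calc #(swapProd (s(x, y) :: l)).support
        ≤ #((swap x y).support ∪ (swapProd l).support) :=
          card_le_card (support_mul_le (swap x y) (swapProd l))
      _ ≤ 2 * (s(x, y) :: l).length := by
          grw [card_union_le, hswap, ih, List.length_cons]; omega

end SwapProd

namespace Subgroup

variable {G : Type*} [Group G]

theorem card_mul_relIndex {H K : Subgroup G} (hHK : H ≤ K) :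
    Nat.card H * H.relIndex K = Nat.card K := by
  rw [← relIndex_bot_left, ← relIndex_bot_left, relIndex_mul_relIndex ⊥ H K bot_le hHK]

theorem minFac_card_le_relIndex {A B : Subgroup G} [Finite A] (h : ¬ A ≤ B) :
    (Nat.card A).minFac ≤ B.relIndex A := by
  have hdvd := relIndex_dvd_card B A
  have hne : B.relIndex A ≠ 0 := fun h0 => Nat.card_pos.ne' (Nat.eq_zero_of_zero_dvd (h0 ▸ hdvd))
  have hne1 : B.relIndex A ≠ 1 := fun h1 => h (relIndex_eq_one.mp h1)
  exact Nat.minFac_le_of_dvd (by omega) hdvd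

theorem card_mul_minFac_le_of_notMem_normalizer [Finite G] {C H : Subgroup G} (hCH : C ≤ H)
    {t : G} (htH : t ∈ H) (ht : t ∉ normalizer (C : Set G)) :
    Nat.card C * (Nat.card C).minFac ≤ Nat.card H := by
  set C' := C.map (MulAut.conj t).toMonoidHom
  have hcard : Nat.card C' = Nat.card C := card_map_of_injective (MulAut.conj t).injective
  have hC'H : C' ≤ H := map_le_iff_le_comap.mpr fun g hg => by
    simpa using H.mul_mem (H.mul_mem htH (hCH hg)) (H.inv_mem htH)
  have hCC' : ¬ C ≤ C' := fun hle =>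
    ht (mem_normalizer_iff_map_conj_eq.mpr (eq_of_le_of_card_ge hle hcard.le).symm)
  calc Nat.card C * (Nat.card C).minFac ≤ Nat.card C' * C'.relIndex C := by
        rw [hcard]; gcongr; exact minFac_card_le_relIndex hCC'
    _ ≤ Nat.card C' * C'.relIndex H := by
        gcongr; exact relIndex_le_of_le_right hCH isFiniteRelIndex_of_finiteIndex.relIndex_ne_zero
    _ = Nat.card H := card_mul_relIndex hC'H

section

variable {V : Type*}

def IsSimplyTransitive (C : Subgroup (Perm V)) : Prop :=
  ∀ v, Function.Bijective fun g : C => (g : Perm V) v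

theorem isSimplyTransitive_zpowers {σ : Perm V} (hσ : ∀ v w, σ.SameCycle v w) :
    (zpowers σ).IsSimplyTransitive := by
  refine fun v => ⟨?_, fun w => ?_⟩
  · rintro ⟨g, hg⟩ ⟨g', hg'⟩ h
    obtain ⟨i, rfl⟩ := mem_zpowers_iff.mp hg
    obtain ⟨j, rfl⟩ := mem_zpowers_iff.mp hg'
    ext w : 2
    obtain ⟨m, rfl⟩ := hσ v w
    simp only at h
    rw [← mul_apply, ← zpow_add, add_comm, zpow_add, mul_apply, h, ← mul_apply, ← zpow_add,
      add_comm, zpow_add, mul_apply]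
  · obtain ⟨i, hi⟩ := hσ v w
    exact ⟨⟨σ ^ i, zpow_mem (mem_zpowers σ) i⟩, hi⟩

namespace IsSimplyTransitive

variable {C : Subgroup (Perm V)}

theorem eq_one_of_apply_eq_self (hC : C.IsSimplyTransitive) {g : Perm V} (hg : g ∈ C) {v : V}
    (hv : g v = v) : g = 1 :=
  congrArg Subtype.val ((hC v).1 (a₁ := ⟨g, hg⟩) (a₂ := 1) hv)

theorem card_eq [Nonempty V] (hC : C.IsSimplyTransitive) : Nat.card C = Nat.card V :=
  Nat.card_eq_of_bijective _ (hC (Classical.arbitrary V))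

/- `g ↦ g v` maps the centralizer of `t` in `C` bijectively onto the fixed points of `t`. -/
theorem card_fixedPoints_dvd (hC : C.IsSimplyTransitive) {t : Perm V}
    (ht : t ∈ normalizer (C : Set (Perm V))) {v : V} (hv : t v = v) :
    Nat.card (Function.fixedPoints t) ∣ Nat.card C := by
  have hcomm : ∀ g ∈ C, g ∈ centralizer {t} ↔ t (g v) = g v := by
    intro g hg
    rw [mem_centralizer_singleton_iff]
    refine ⟨fun h => by rw [← mul_apply, ← h, mul_apply, hv], fun h => ?_⟩
    have hconj : t * g * t⁻¹ = g := by
      refine congrArg Subtype.val ((hC v).1 (a₁ := ⟨t * g * t⁻¹, ?_⟩) (a₂ := ⟨g, hg⟩) ?_)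
      · exact (mem_normalizer_iff.mp ht g).mp hg
      · have hv' : t⁻¹ v = v := by rw [inv_eq_iff_eq, hv]
        simp only [mul_apply, hv', h]
    exact (mul_inv_eq_iff_eq_mul.mp hconj).symm
  let f : ↥(C ⊓ centralizer {t}) → Function.fixedPoints t := fun g =>
    ⟨g.1 v, (hcomm g.1 g.2.1).mp g.2.2⟩
  have hf : Function.Bijective f := by
    refine ⟨fun g g' h => ?_, fun ⟨w, hw⟩ => ?_⟩
    · have := (hC v).1 (a₁ := ⟨g, g.2.1⟩) (a₂ := ⟨g', g'.2.1⟩) (congrArg Subtype.val h)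
      exact Subtype.ext (by simpa using this)
    · obtain ⟨⟨g, hg⟩, rfl⟩ := (hC v).2 w
      exact ⟨⟨g, hg, (hcomm g hg).mpr hw⟩, rfl⟩
  rw [← Nat.card_eq_of_bijective f hf]
  exact card_dvd_of_le inf_le_left

theorem card_mul_minFac_le [Fintype V] {H : Subgroup (Perm V)} (hC : C.IsSimplyTransitive)
    (hCH : C ≤ H) {t : Perm V} (htH : t ∈ H) (ht1 : t ≠ 1)
    (hfix : Fintype.card V < 3 * Nat.card (Function.fixedPoints t)) :
    Fintype.card V * (Fintype.card V).minFac ≤ Nat.card H := by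
  set n := Fintype.card V
  obtain ⟨⟨v, hv⟩⟩ : Nonempty (Function.fixedPoints t) := (Nat.card_pos_iff.mp (by omega)).1
  have hCn : Nat.card C = n := by
    have : Nonempty V := ⟨v⟩
    rw [hC.card_eq, Nat.card_eq_fintype_card]
  by_cases hN : t ∈ normalizer (C : Set (Perm V))
  · have hlt : Nat.card (Function.fixedPoints t) < n := by
      obtain ⟨w, hw⟩ : ∃ w, t w ≠ w := by
        by_contra! h
        exact ht1 (Equiv.ext h)
      exact (Finite.card_subtype_lt (p := (· ∈ Function.fixedPoints t)) hw).trans_eq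
        Nat.card_eq_fintype_card
    -- the number of fixed points divides `n` and lies strictly between `n/3` and `n`
    have htwo : n.minFac = 2 := by
      obtain ⟨m, hm⟩ := hC.card_fixedPoints_dvd hN hv
      rw [hCn] at hm
      have h1 : 1 < m := by
        by_contra! h
        interval_cases m <;> omega
      have h3 : m < 3 := by
        by_contra! h
        have := Nat.mul_le_mul_left (Nat.card (Function.fixedPoints t)) h
        omega
      rw [Nat.minFac_eq_two_iff]
      exact ⟨Nat.card (Function.fixedPoints t), by rw [hm, show m = 2 by omega, mul_comm]⟩
    have htC : t ∉ C := fun h => ht1 (hC.eq_one_of_apply_eq_self h hv)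
    have hne1 : C.relIndex H ≠ 1 := fun h => htC (relIndex_eq_one.mp h htH)
    have hne0 : C.relIndex H ≠ 0 := isFiniteRelIndex_of_finiteIndex.relIndex_ne_zero
    rw [htwo, ← hCn, ← card_mul_relIndex hCH]
    gcongr
    omega
  · rw [← hCn]
    exact card_mul_minFac_le_of_notMem_normalizer hCH htH hN

end IsSimplyTransitive

end

end Subgroup

theorem Nat.div_le_sub_totient {n d : ℕ} (hd : 1 < d) (hdn : d ∣ n) : n / d ≤ n - n.totient := by
  have hsplit := card_filter_add_card_filter_not (s := range n) (n.Coprime ·)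
  rw [card_range, ← Nat.totient_eq_card_coprime] at hsplit
  have hmul : n / d ≤ #{a ∈ range n | ¬ n.Coprime a} := by
    calc n / d = #(range (n / d)) := (card_range _).symm
      _ ≤ _ :=
        card_le_card_of_injOn (d * ·) (fun j hj => ?_) (mul_right_injective₀ (by omega)).injOn
    simp only [coe_range, Set.mem_Iio] at hj
    simp only [coe_filter, mem_range, Set.mem_ofPred_eq]
    refine ⟨?_, Nat.not_coprime_of_dvd_of_dvd hd hdn (dvd_mul_right d j)⟩
    calc d * j < d * (n / d) := by gcongr
      _ = n := Nat.mul_div_cancel' hdn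
  omega

section Coloring

variable {V : Type*} [Fintype V] {G : SimpleGraph V} {k : ℕ} {κ : Sym2 V → ℕ}

variable (G κ) in
noncomputable def colorClass (a : ℕ) : Finset (Sym2 V) := {e ∈ G.edgeFinset | κ e = a}

variable (G κ) in
noncomputable def colorToggle (a : ℕ) : Perm V := swapProd (colorClass G κ a).toList

theorem mem_colorClass {a : ℕ} {e : Sym2 V} : e ∈ colorClass G κ a ↔ e ∈ G.edgeSet ∧ κ e = a := by
  rw [colorClass, mem_filter, mem_edgeFinset]

theorem pairwise_colorClass_toList
    (hκ : ∀ u v w : V, G.Adj u v → G.Adj u w → v ≠ w → κ s(u, v) ≠ κ s(u, w)) (a : ℕ) :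
    (colorClass G κ a).toList.Pairwise fun e f => ∀ u ∈ e, u ∉ f := by
  refine (nodup_toList _).imp_of_mem fun he hf hef u hue huf => ?_
  obtain ⟨heG, hea⟩ := mem_colorClass.mp (mem_toList.mp he)
  obtain ⟨hfG, hfa⟩ := mem_colorClass.mp (mem_toList.mp hf)
  obtain ⟨v, rfl⟩ := Sym2.mem_iff_exists.mp hue
  obtain ⟨w, rfl⟩ := Sym2.mem_iff_exists.mp huf
  exact hκ u v w heG hfG (fun h => hef (h ▸ rfl)) (hea.trans hfa.symm)

theorem isToggle_colorToggle
    (hκ : ∀ u v w : V, G.Adj u v → G.Adj u w → v ≠ w → κ s(u, v) ≠ κ s(u, w)) (a : ℕ) :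
    IsToggle G κ a (colorToggle G κ a) := fun v w hvw => by
  rw [colorToggle, swapProd_apply_eq_iff (pairwise_colorClass_toList hκ a) hvw, mem_toList,
    mem_colorClass, mem_edgeSet]

theorem colorToggle_mem_coloringGroup (hκ : IsProperEdgeColoring G k κ) {a : ℕ} (ha : a ∈ Icc 1 k) :
    colorToggle G κ a ∈ coloringGroup G k κ :=
  Subgroup.subset_closure ⟨a, (mem_Icc.mp ha).1, (mem_Icc.mp ha).2, isToggle_colorToggle hκ.2.2 a⟩

theorem exists_mem_coloringGroup_forall_sameCycle (hG : G.IsTree)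
    (hκ : IsProperEdgeColoring G k κ) :
    ∃ σ ∈ coloringGroup G k κ, ∀ v w, σ.SameCycle v w := by
  set L := (List.range' 1 k).flatMap fun a => (colorClass G κ a).toList
  have hL : ∀ e, e ∈ L ↔ e ∈ G.edgeSet := fun e => by
    simp only [L, List.mem_flatMap, mem_toList, mem_colorClass, List.mem_range'_1]
    refine ⟨fun ⟨_, _, he, _⟩ => he, fun he => ⟨κ e, ?_, he, rfl⟩⟩
    have := mem_Icc.mp (hκ.1 e he)
    omega
  have hLnodup : L.Nodup := by
    refine List.nodup_flatMap.mpr ⟨fun a _ => nodup_toList _, ?_⟩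
    refine (List.nodup_range' (step := 1)).imp fun hab => ?_
    exact List.disjoint_left.mpr fun _ hea heb => hab <|
      (mem_colorClass.mp (mem_toList.mp hea)).2.symm.trans (mem_colorClass.mp (mem_toList.mp heb)).2
  refine ⟨swapProd L, ?_, fun v w => sameCycle_swapProd_of_reachable hG.isAcyclic hLnodup
    (fun e => (hL e).1) ?_⟩
  · have : swapProd L = ((List.range' 1 k).map (colorToggle G κ)).prod := by
      simp only [L, swapProd, List.flatMap, List.map_flatten, List.prod_flatten, List.map_map]
      rfl
    rw [this]
    refine Subgroup.list_prod_mem _ fun τ hτ => ?_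
    obtain ⟨a, ha, rfl⟩ := List.mem_map.mp hτ
    exact colorToggle_mem_coloringGroup hκ (mem_Icc.mpr (by rw [List.mem_range'_1] at ha; omega))
  · rw [show {e | e ∈ L} = G.edgeSet from Set.ext hL, fromEdgeSet_edgeSet]
    exact hG.connected.preconnected v w

theorem exists_card_colorClass_mul_le (hk : 0 < k) (hcol : ∀ e ∈ G.edgeSet, κ e ∈ Icc 1 k) :
    ∃ a ∈ Icc 1 k, #(colorClass G κ a) * k ≤ #G.edgeFinset := by
  obtain ⟨a, ha, hmin⟩ := exists_min_image (Icc 1 k) (fun a => #(colorClass G κ a))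
    ⟨1, mem_Icc.mpr ⟨le_rfl, hk⟩⟩
  refine ⟨a, ha, ?_⟩
  calc #(colorClass G κ a) * k = #(Icc 1 k) • #(colorClass G κ a) := by
        rw [Nat.card_Icc, Nat.add_sub_cancel, smul_eq_mul, mul_comm]
    _ ≤ ∑ b ∈ Icc 1 k, #(colorClass G κ b) := card_nsmul_le_sum _ _ _ hmin
    _ = #G.edgeFinset :=
        (card_eq_sum_card_fiberwise fun e he => hcol e (mem_edgeFinset.mp he)).symm

theorem exists_mem_coloringGroup_ne_one_lt_three_mul_card_fixedPoints (hG : G.IsTree)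
    (hk : 3 ≤ k) (hκ : IsProperEdgeColoring G k κ) :
    ∃ t ∈ coloringGroup G k κ, t ≠ 1 ∧
      Fintype.card V < 3 * Nat.card (Function.fixedPoints t) := by
  obtain ⟨a, ha, hsmall⟩ := exists_card_colorClass_mul_le (by omega) hκ.1
  refine ⟨colorToggle G κ a, colorToggle_mem_coloringGroup hκ ha, ?_, ?_⟩
  · obtain ⟨e, he, hea⟩ := hκ.2.1 a ha
    induction e using Sym2.inductionOn with
    | _ x y =>
    intro h1
    have := (isToggle_colorToggle hκ.2.2 a x y (G.ne_of_adj he)).mpr ⟨he, hea⟩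
    rw [h1] at this
    exact G.ne_of_adj he this
  · have hsupp := card_support_swapProd_le (colorClass G κ a).toList
    rw [length_toList] at hsupp
    have hfix : Nat.card (Function.fixedPoints (colorToggle G κ a)) =
        Fintype.card V - #(colorToggle G κ a).support := by
      rw [Nat.card_eq_fintype_card, card_fixedPoints, sum_cycleType]
    have htree := hG.card_edgeFinset
    have := Nat.mul_le_mul_left #(colorClass G κ a) hk
    rw [hfix, colorToggle]
    omega

end Coloring

/-- If `(G,κ)` is a proper edge coloring of a tree on `n` vertices using
at least 3 colors, then `|𝔊_κ| ≥ n² / (n − φ(n))`, i.e. `|𝔊_κ| · (n − φ(n)) ≥ n²`. -/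
theorem stmt_8 {V : Type*} [Fintype V] (G : SimpleGraph V) (hG : G.IsTree)
    (k : ℕ) (hk : 3 ≤ k) (κ : Sym2 V → ℕ) (hκ : IsProperEdgeColoring G k κ) :
    (Fintype.card V) ^ 2 ≤
      Nat.card ↥(coloringGroup G k κ) * (Fintype.card V - Nat.totient (Fintype.card V)) := by
  set n := Fintype.card V
  obtain ⟨σ, hσ, hσV⟩ := exists_mem_coloringGroup_forall_sameCycle hG hκ
  obtain ⟨t, ht, ht1, hfix⟩ :=
    exists_mem_coloringGroup_ne_one_lt_three_mul_card_fixedPoints hG hk hκ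
  have hn : 1 < n := (not_le.mp (card_support_le_one.not.mpr ht1)).trans_le (card_le_univ _)
  have hgroup : n * n.minFac ≤ Nat.card (coloringGroup G k κ) :=
    (Subgroup.isSimplyTransitive_zpowers hσV).card_mul_minFac_le (Subgroup.zpowers_le.mpr hσ)
      ht ht1 hfix
  have htotient : n / n.minFac ≤ n - n.totient :=
    Nat.div_le_sub_totient (Nat.minFac_prime hn.ne').one_lt (Nat.minFac_dvd n)
  calc n ^ 2 = n * n.minFac * (n / n.minFac) := by
        rw [mul_assoc, Nat.mul_div_cancel' (Nat.minFac_dvd n), sq]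
    _ ≤ _ := Nat.mul_le_mul hgroup htotient
end

section
/- Let (G,κ) be a proper edge coloring of a tree. Then Aut_κ(G) has order at most 2, i.e. it is either trivial or has exactly two elements. -/
/-!
A colour automorphism is a graph automorphism, and as the colouring is proper it is determined
by the image of a single vertex. A finite tree has a 2-colouring `c` of its vertices, and a graph
automorphism either preserves or swaps the two colour classes. Every automorphism of a finite tree
fixes a vertex or moves one to a neighbour: otherwise, stepping from a vertex of minimal
displacement `dist v (φ v)` towards its image and repeating yields an infinite non-backtracking
walk. A `c`-preserving automorphism cannot move a vertex to a neighbour, so it fixes a vertex.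
Hence two colour automorphisms `σ, τ` with `c (σ r) = c (τ r)` agree somewhere and coincide, so
`σ ↦ c (σ r)` is injective into `Bool`.
-/

open scoped Classical

namespace SimpleGraph

variable {V : Type*} {G : SimpleGraph V}

def walkBackAlong (f : ℕ → V) (hf : ∀ n, G.Adj (f n) (f (n + 1))) :
    (n : ℕ) → G.Walk (f n) (f 0)
  | 0 => .nil
  | n + 1 => .cons (hf n).symm (walkBackAlong f hf n)

@[simp]
lemma length_walkBackAlong (f : ℕ → V) (hf : ∀ n, G.Adj (f n) (f (n + 1))) (n : ℕ) :
    (walkBackAlong f hf n).length = n := by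
  induction n with
  | zero => rfl
  | succ n ih => simp [walkBackAlong, ih]

lemma IsAcyclic.isPath_walkBackAlong (hG : G.IsAcyclic) {f : ℕ → V}
    (hf : ∀ n, G.Adj (f n) (f (n + 1))) (hback : ∀ n, f (n + 2) ≠ f n) (n : ℕ) :
    (walkBackAlong f hf n).IsPath := by
  induction n with
  | zero => exact .nil
  | succ n ih =>
    refine ih.cons fun hmem => ?_
    have hsnd := hG.eq_snd_of_adj_start ih (hf n) hmem
    cases n with
    | zero => exact (hf 0).ne hsnd.symm
    | succ n => exact hback n (by simpa [walkBackAlong] using hsnd)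

lemma IsAcyclic.exists_apply_add_two_eq [Finite V] (hG : G.IsAcyclic) (f : ℕ → V)
    (hf : ∀ n, G.Adj (f n) (f (n + 1))) : ∃ n, f (n + 2) = f n := by
  have := Fintype.ofFinite V
  by_contra! hback
  simpa using (hG.isPath_walkBackAlong hf hback (Fintype.card V)).length_lt

lemma IsAcyclic.eq_of_length_eq_dist (hG : G.IsAcyclic) {u v : V} {p q : G.Walk u v}
    (hp : p.length = G.dist u v) (hq : q.length = G.dist u v) : p = q :=
  congrArg Subtype.val <| (hG.subsingleton_path u v).elim
    ⟨p, p.isPath_of_length_eq_dist hp⟩ ⟨q, q.isPath_of_length_eq_dist hq⟩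

/- The geodesic `p` from `w` to `φ w` with its first edge removed and the image of that edge
appended is a walk of the same length from `p.snd` to its image; by minimality it is a geodesic,
hence it is `q`, and its second vertex is the third vertex of `p`. -/
lemma IsTree.length_eq_and_snd_ne_of_minimal (hG : G.IsTree) (φ : G ≃g G) {w : V}
    (hmin : ∀ x, G.dist w (φ w) ≤ G.dist x (φ x)) {p : G.Walk w (φ w)}
    (hp : p.length = G.dist w (φ w)) (h2 : 2 ≤ p.length) {q : G.Walk p.snd (φ p.snd)}
    (hq : q.length = G.dist p.snd (φ p.snd)) :
    q.length = p.length ∧ q.snd ≠ w := by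
  have hnil : ¬ p.Nil := Walk.not_nil_iff_lt_length.mpr (by omega)
  set W := p.tail.concat (φ.map_adj_iff.mpr (p.adj_snd hnil))
  have hW : W.length = p.length := by
    simp only [W, Walk.length_concat, Walk.length_tail]
    omega
  have hWdist : W.length = G.dist p.snd (φ p.snd) :=
    le_antisymm (hW ▸ hp ▸ hmin _) (dist_le W)
  obtain rfl : q = W := hG.isAcyclic.eq_of_length_eq_dist hq hWdist
  refine ⟨hW, fun h => ?_⟩
  have hsnd : W.snd = p.getVert 2 := by
    simp only [W, Walk.snd, Walk.concat_eq_append]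
    rw [Walk.getVert_append', if_pos (by rw [Walk.length_tail]; omega), Walk.getVert_tail]
  have := (p.isPath_of_length_eq_dist hp).getVert_injOn h2 (Nat.zero_le _)
    (hsnd.symm.trans (h.trans p.getVert_zero.symm))
  omega

theorem IsTree.exists_apply_eq_or_adj_apply [Finite V] (hG : G.IsTree) (φ : G ≃g G) :
    ∃ v, φ v = v ∨ G.Adj v (φ v) := by
  have hconn := hG.connected
  have := hconn.nonempty
  obtain ⟨w₀, hmin⟩ := Finite.exists_min fun x => G.dist x (φ x)
  by_contra! hfar
  have h2 : ∀ x, 2 ≤ G.dist x (φ x) := fun x => by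
    have h0 : G.dist x (φ x) ≠ 0 := fun h => (hfar x).1 (hconn.dist_eq_zero_iff.mp h).symm
    have h1 : G.dist x (φ x) ≠ 1 := fun h => (hfar x).2 (dist_eq_one_iff_adj.mp h)
    omega
  choose geo hgeo using fun x => hconn.exists_walk_length_eq_dist x (φ x)
  set F := fun x => (geo x).snd
  have hstep : ∀ x, G.dist x (φ x) = G.dist w₀ (φ w₀) →
      G.dist (F x) (φ (F x)) = G.dist w₀ (φ w₀) ∧ F (F x) ≠ x := fun x hx => by
    obtain ⟨hlen, hne⟩ := hG.length_eq_and_snd_ne_of_minimal φ (hx ▸ hmin) (hgeo x)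
      (hgeo x ▸ h2 x) (hgeo (F x))
    exact ⟨by rw [← hgeo, hlen, hgeo, hx], hne⟩
  have hiter : ∀ n, G.dist (F^[n] w₀) (φ (F^[n] w₀)) = G.dist w₀ (φ w₀) := fun n => by
    induction n with
    | zero => rfl
    | succ n ih => rw [Function.iterate_succ_apply']; exact (hstep _ ih).1
  obtain ⟨n, hn⟩ := hG.isAcyclic.exists_apply_add_two_eq (fun n => F^[n] w₀) fun n => by
    rw [Function.iterate_succ_apply']
    refine (geo _).adj_snd (Walk.not_nil_iff_lt_length.mpr ?_)
    rw [hgeo]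
    exact lt_of_lt_of_le two_pos (h2 _)
  exact (hstep _ (hiter n)).2 (by simpa only [Function.iterate_succ_apply'] using hn)

lemma Coloring.apply_iso_eq_iff (c : G.Coloring Bool) (φ : G ≃g G) {x y : V}
    (p : G.Walk x y) : c (φ x) = c x ↔ c (φ y) = c y := by
  have h := c.even_length_iff_congr p
  have hφ := c.even_length_iff_congr (p.map φ.toHom)
  rw [Walk.length_map, h] at hφ
  revert hφ
  generalize c x = a, c y = b, c (φ x) = a', c (φ.toHom y) = b'
  decide +revert

theorem IsTree.exists_apply_eq_apply_of_coloring_eq [Finite V] (hG : G.IsTree)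
    (c : G.Coloring Bool) (φ ψ : G ≃g G) {r : V} (hr : c (φ r) = c (ψ r)) :
    ∃ v, φ v = ψ v := by
  set ρ := φ.trans ψ.symm
  have hρr : c (ρ r) = c r := by
    obtain ⟨p⟩ := hG.connected (ρ r) r
    have := c.apply_iso_eq_iff ψ p
    simp only [ρ, RelIso.trans_apply, RelIso.apply_symm_apply, hr] at this ⊢
    revert this
    generalize c (ψ r) = a, c (ψ.symm (φ r)) = b, c r = d
    decide +revert
  obtain ⟨v, hv | hv⟩ := hG.exists_apply_eq_or_adj_apply ρ
  · exact ⟨v, by simpa [ρ] using congrArg ψ hv⟩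
  · obtain ⟨p⟩ := hG.connected r v
    exact absurd ((c.apply_iso_eq_iff ρ p).mp hρr) (c.valid hv).symm

end SimpleGraph

namespace IsColorAut

variable {V : Type*} {G : SimpleGraph V} {κ : Sym2 V → ℕ} {σ τ : Equiv.Perm V}

lemma adj_iff (h : IsColorAut G κ σ) {i j : V} : G.Adj (σ i) (σ j) ↔ G.Adj i j :=
  ⟨fun ha => ((h i j _).mpr ⟨ha, rfl⟩).1, fun ha => ((h i j _).mp ⟨ha, rfl⟩).1⟩

lemma color_apply (h : IsColorAut G κ σ) {i j : V} (ha : G.Adj i j) :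
    κ s(σ i, σ j) = κ s(i, j) :=
  ((h i j _).mp ⟨ha, rfl⟩).2

def toIso (h : IsColorAut G κ σ) : G ≃g G :=
  ⟨σ, h.adj_iff⟩

lemma apply_eq_of_adj {k : ℕ} (hκ : IsProperEdgeColoring G k κ) (hσ : IsColorAut G κ σ)
    (hτ : IsColorAut G κ τ) {x y : V} (hx : σ x = τ x) (ha : G.Adj x y) : σ y = τ y := by
  by_contra hne
  refine hκ.2.2 (σ x) (σ y) (τ y) (hσ.adj_iff.mpr ha) (hx ▸ hτ.adj_iff.mpr ha) hne ?_
  rw [hσ.color_apply ha, hx, hτ.color_apply ha]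

lemma eq_of_apply_eq {k : ℕ} (hκ : IsProperEdgeColoring G k κ) (hconn : G.Connected)
    (hσ : IsColorAut G κ σ) (hτ : IsColorAut G κ τ) {x : V} (hx : σ x = τ x) : σ = τ := by
  ext y
  obtain ⟨p⟩ := hconn x y
  induction p with
  | nil => exact hx
  | cons ha p ih => exact ih (apply_eq_of_adj hκ hσ hτ hx ha)

end IsColorAut

/-- For a proper edge coloring of a tree, `Aut_κ(G)` has at most two
elements (it is trivial or of order two). -/
theorem stmt_9 {V : Type*} [Fintype V] (G : SimpleGraph V) (hG : G.IsTree)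
    (k : ℕ) (κ : Sym2 V → ℕ) (hκ : IsProperEdgeColoring G k κ) :
    {σ : Equiv.Perm V | IsColorAut G κ σ}.ncard ≤ 2 := by
  obtain ⟨r⟩ := hG.connected.nonempty
  let c : G.Coloring Bool := G.recolorOfEquiv finTwoEquiv hG.colorable_two.some
  calc {σ : Equiv.Perm V | IsColorAut G κ σ}.ncard
      ≤ (Set.univ : Set Bool).ncard :=
        Set.ncard_le_ncard_of_injOn (fun σ => c (σ r)) (fun _ _ => Set.mem_univ _)
          (fun σ hσ τ hτ h => ?_) Set.finite_univ
    _ = 2 := by simp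
  obtain ⟨v, hv⟩ := hG.exists_apply_eq_apply_of_coloring_eq c hσ.toIso hτ.toIso h
  exact hσ.eq_of_apply_eq hκ hG.connected hτ hv
end

section
/- Let (G,κ) be a proper edge coloring of a tree. Then either the centralizer of 𝔊_κ in Sym(V(G)) is trivial, or |V(G)| = 2m is even and there is an injective group homomorphism from 𝔊_κ into the hyperoctahedral group C₂ ≀ S_m, i.e. the wreath product ((Z/2Z)^m) ⋊ S_m with S_m permuting the m coordinates (equivalently, the group of signed permutations of m letters). -/
open scoped Classical

/-- The "negation" permutation of `Fin m × Bool` (the set of `m` letters with signs),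
flipping the sign of every letter. The hyperoctahedral group `C₂ ≀ S_m` of signed
permutations of `m` letters is realized as the centralizer of this permutation in
`Sym(Fin m × Bool)`. -/
def negPerm (m : ℕ) : Equiv.Perm (Fin m × Bool) :=
  Equiv.prodCongr (Equiv.refl (Fin m)) ⟨Bool.not, Bool.not, Bool.not_not, Bool.not_not⟩

/-!
The coloring group is transitive on the vertices of the tree, so its centralizer acts freely,
and an element of the centralizer commutes with the color toggles, hence is a graph automorphism.
A fixed-point-free automorphism `φ` of a finite tree inverts an edge: take `v` minimizing
`dist v (φ v)`; the geodesic from `v` to `φ v` must fold back onto its `φ`-image at `φ v`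
(otherwise gluing it to its images under `φ, φ², …` would give arbitrarily long paths), and by
minimality this forces `dist v (φ v) = 1` and `φ (φ v) = v`. Hence every nontrivial `σ` in the
centralizer is a fixed-point-free involution. Such an involution is conjugate to the sign flip
through some `V ≃ Fin m × Bool`, and this conjugation carries `𝔊_κ`, which commutes with `σ`,
into the centralizer of the sign flip.
-/

namespace SimpleGraph

variable {V : Type*} {G : SimpleGraph V}

lemma IsAcyclic.isPath_append_map (hG : G.IsAcyclic) (φ : G ≃g G) {v : V}
    {p : G.Walk v (φ v)} (hp : p.IsPath) (hnil : ¬p.Nil) (hturn : φ p.snd ≠ p.penultimate) :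
    (p.append (p.map φ.toHom)).IsPath := by
  have hchain := (hG.isPath_iff_isChain p).1 hp
  rw [hG.isPath_iff_isChain, Walk.edges_append, Walk.edges_map, List.isChain_append]
  refine ⟨hchain, List.isChain_map_of_isChain (Sym2.map φ)
    (fun _ _ => (Sym2.map.injective φ.injective).ne) hchain, ?_⟩
  have hne : p.edges ≠ [] := Walk.edges_eq_nil.not.mpr hnil
  intro e he e' he'
  rw [List.getLast?_eq_some_getLast hne, Option.mem_some_iff,
    Walk.getLast_edges_eq_mk_penultimate_end] at he
  rw [List.head?_map, List.head?_eq_some_head hne, Option.map_some, Option.mem_some_iff,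
    Walk.head_edges_eq_mk_start_snd] at he'
  subst he he'
  simp only [Sym2.map_mk, ne_eq, Sym2.eq_iff, not_or, not_and]
  exact ⟨fun _ h => (p.adj_snd hnil).ne (φ.injective h), fun h _ => hturn h.symm⟩

lemma IsAcyclic.exists_isPath_apply_apply (hG : G.IsAcyclic) (φ : G ≃g G) {v : V}
    {p : G.Walk v (φ v)} (hp : p.IsPath) (hnil : ¬p.Nil) (hturn : φ p.snd ≠ p.penultimate) :
    ∃ q : G.Walk v (φ (φ v)), q.IsPath ∧ q.length = 2 * p.length ∧ ¬q.Nil ∧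
      φ (φ q.snd) ≠ q.penultimate := by
  have hpos : 1 ≤ p.length := Walk.not_nil_iff_lt_length.1 hnil
  refine ⟨p.append (p.map φ.toHom), hG.isPath_append_map φ hp hnil hturn, ?_, ?_, ?_⟩
  · rw [Walk.length_append, Walk.length_map, two_mul]
  · rw [Walk.not_nil_iff_lt_length, Walk.length_append]
    omega
  · rw [Walk.penultimate, Walk.snd, Walk.getVert_append', if_pos hpos,
      Walk.length_append, Walk.length_map, Walk.getVert_append, if_neg (by omega),
      Walk.getVert_map,
      show p.length + p.length - 1 - p.length = p.length - 1 by omega]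
    exact fun h => hturn (φ.injective h)

lemma IsAcyclic.exists_isPath_pow_two_pow (hG : G.IsAcyclic) (φ : G ≃g G) {v : V}
    {p : G.Walk v (φ v)} (hp : p.IsPath) (hnil : ¬p.Nil) (hturn : φ p.snd ≠ p.penultimate)
    (n : ℕ) : ∃ q : G.Walk v ((φ ^ 2 ^ n) v), q.IsPath ∧ q.length = 2 ^ n * p.length ∧
      ¬q.Nil ∧ (φ ^ 2 ^ n) q.snd ≠ q.penultimate := by
  induction n with
  | zero => exact ⟨p, hp, (one_mul _).symm, hnil, hturn⟩
  | succ n ih =>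
    obtain ⟨q, hq, hqlen, hqnil, hqturn⟩ := ih
    rw [pow_succ, pow_mul, sq]
    obtain ⟨r, hr, hrlen, hrnil, hrturn⟩ := hG.exists_isPath_apply_apply _ hq hqnil hqturn
    exact ⟨r, hr, hrlen.trans (by rw [hqlen]; ring), hrnil, hrturn⟩

lemma IsAcyclic.apply_snd_eq_penultimate [Fintype V] (hG : G.IsAcyclic) (φ : G ≃g G) {v : V}
    {p : G.Walk v (φ v)} (hp : p.IsPath) (hnil : ¬p.Nil) : φ p.snd = p.penultimate := by
  by_contra hturn
  obtain ⟨q, hq, hqlen, -⟩ := hG.exists_isPath_pow_two_pow φ hp hnil hturn (Fintype.card V)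
  have := hq.length_lt
  have := Nat.lt_two_pow_self (n := Fintype.card V)
  have := Walk.not_nil_iff_lt_length.1 hnil
  nlinarith

lemma IsTree.exists_apply_apply_eq_self [Fintype V] (hG : G.IsTree) (φ : G ≃g G)
    (hφ : ∀ v, φ v ≠ v) : ∃ v, φ (φ v) = v := by
  have := hG.connected.nonempty
  obtain ⟨v, -, hmin⟩ :=
    Finset.univ.exists_min_image (fun v => G.dist v (φ v)) Finset.univ_nonempty
  obtain ⟨p, hp, hplen⟩ := hG.connected.exists_path_of_dist v (φ v)
  have hnil : ¬p.Nil := fun h => hφ v h.eq.symm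
  have hturn := hG.isAcyclic.apply_snd_eq_penultimate φ hp hnil
  rcases Nat.lt_or_ge p.length 2 with hlen | hlen
  · have hlen1 : p.length = 1 := by
      have := Walk.not_nil_iff_lt_length.1 hnil
      omega
    have hsnd : p.snd = φ v := by rw [Walk.snd, ← hlen1, Walk.getVert_length]
    have hpen : p.penultimate = v := by rw [Walk.penultimate, hlen1, Walk.getVert_zero]
    exact ⟨v, by rw [← hsnd, hturn, hpen]⟩
  · have htail : p.tail.penultimate = p.penultimate := by
      rw [Walk.penultimate, Walk.getVert_tail, Walk.length_tail]
      congr 1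
      omega
    have hshort := dist_le p.tail.dropLast
    rw [Walk.length_dropLast, Walk.length_tail, htail, ← hturn] at hshort
    have := hmin p.snd (Finset.mem_univ _)
    omega

end SimpleGraph

namespace Equiv.Perm

variable {α : Type*} [Fintype α]

lemma card_eq_two_mul_card_cycleType [DecidableEq α] {σ : Perm α} (hσ : σ ^ 2 = 1)
    (hfree : ∀ x, σ x ≠ x) : Fintype.card α = 2 * Multiset.card σ.cycleType := by
  have hsupp : σ.support = Finset.univ :=
    Finset.eq_univ_of_forall fun x => mem_support.2 (hfree x)
  have hsum := congrArg Multiset.sum (cycleType_of_pow_prime_eq_one hσ)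
  rw [sum_cycleType, hsupp, Finset.card_univ, Multiset.sum_replicate, smul_eq_mul] at hsum
  rw [hsum, mul_comm]

lemma isConj_of_sq_eq_one_of_apply_ne {σ τ : Perm α} (hσ : σ ^ 2 = 1) (hτ : τ ^ 2 = 1)
    (hσfree : ∀ x, σ x ≠ x) (hτfree : ∀ x, τ x ≠ x) : IsConj σ τ := by
  classical
  rw [isConj_iff_cycleType_eq, cycleType_of_pow_prime_eq_one hσ,
    cycleType_of_pow_prime_eq_one hτ]
  have := card_eq_two_mul_card_cycleType hσ hσfree
  have := card_eq_two_mul_card_cycleType hτ hτfree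
  congr 1
  omega

end Equiv.Perm

lemma negPerm_sq (m : ℕ) : negPerm m ^ 2 = 1 := by
  ext ⟨i, b⟩ <;> simp [negPerm, sq]

lemma negPerm_apply_ne (m : ℕ) (x : Fin m × Bool) : negPerm m x ≠ x := by
  obtain ⟨i, b⟩ := x
  simp [negPerm]

lemma exists_equiv_permCongr_eq_negPerm {V : Type*} [Fintype V] {σ : Equiv.Perm V}
    (hσ : σ ^ 2 = 1) (hfree : ∀ v, σ v ≠ v) :
    ∃ m, Fintype.card V = 2 * m ∧ ∃ e : V ≃ Fin m × Bool, e.permCongr σ = negPerm m := by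
  classical
  refine ⟨_, Equiv.Perm.card_eq_two_mul_card_cycleType hσ hfree, ?_⟩
  obtain ⟨e₀⟩ : Nonempty (V ≃ Fin (Multiset.card σ.cycleType) × Bool) := by
    rw [← Fintype.card_eq, Fintype.card_prod, Fintype.card_fin, Fintype.card_bool, mul_comm,
      ← Equiv.Perm.card_eq_two_mul_card_cycleType hσ hfree]
  have hσ₀ : e₀.permCongrHom σ ^ 2 = 1 := by rw [← map_pow, hσ, map_one]
  have hfree₀ : ∀ x, e₀.permCongrHom σ x ≠ x := fun x h =>
    hfree (e₀.symm x) (e₀.injective (by simpa [Equiv.permCongr_apply] using h))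
  obtain ⟨c, hc⟩ := isConj_iff.1 <|
    Equiv.Perm.isConj_of_sq_eq_one_of_apply_ne hσ₀ (negPerm_sq _) hfree₀ (negPerm_apply_ne _)
  refine ⟨e₀.trans c, ?_⟩
  rw [← hc]
  rfl

lemma Subgroup.exists_injective_hom_centralizer {G G' : Type*} [Group G] [Group G']
    (ψ : G ≃* G') {H : Subgroup G} {a : G} (ha : a ∈ Subgroup.centralizer (H : Set G)) :
    ∃ f : H →* Subgroup.centralizer ({ψ a} : Set G'), Function.Injective f := by
  refine ⟨(ψ.toMonoidHom.comp H.subtype).codRestrict _ fun h => ?_,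
    fun x y hxy => Subtype.ext (ψ.injective (congrArg Subtype.val hxy))⟩
  rw [Subgroup.mem_centralizer_singleton_iff]
  simp only [MonoidHom.coe_comp, Function.comp_apply, Subgroup.coe_subtype,
    MulEquiv.coe_toMonoidHom, ← map_mul, Subgroup.mem_centralizer_iff.1 ha h h.2]

section ColoringGroup

variable {V : Type*} {G : SimpleGraph V} {k : ℕ} {κ : Sym2 V → ℕ}

lemma exists_isToggle_s10 (hκ : IsProperEdgeColoring G k κ) (a : ℕ) :
    ∃ τ : Equiv.Perm V, IsToggle G κ a τ := by
  let P : V → V → Prop := fun v w => G.Adj v w ∧ κ s(v, w) = a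
  have hunique : ∀ {v w w'}, P v w → P v w' → w = w' := fun h h' =>
    by_contra fun hne => hκ.2.2 _ _ _ h.1 h'.1 hne (h.2.trans h'.2.symm)
  have hsymm : ∀ {v w}, P v w → P w v := fun h => ⟨h.1.symm, Sym2.eq_swap ▸ h.2⟩
  let f : V → V := fun v => if h : ∃ w, P v w then h.choose else v
  have hf : ∀ {v w}, P v w → f v = w := fun h => by
    simp only [f, dif_pos (⟨_, h⟩ : ∃ w, P _ w)]
    exact hunique (Exists.choose_spec _) h
  have hf' : ∀ v, f v = v ∨ P v (f v) := fun v => by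
    by_cases h : ∃ w, P v w
    · exact Or.inr (hf h.choose_spec ▸ h.choose_spec)
    · exact Or.inl (dif_neg h)
  have hinv : Function.Involutive f := fun v =>
    (hf' v).elim (fun h => by rw [h, h]) (fun h => hf (hsymm h))
  refine ⟨hinv.toPerm f, fun v w hne => ⟨fun h => ?_, hf⟩⟩
  rw [Function.Involutive.coe_toPerm] at h
  exact h ▸ (hf' v).resolve_left (h ▸ hne.symm)

lemma exists_isToggle_mem_coloringGroup (hκ : IsProperEdgeColoring G k κ) {u w : V}
    (h : G.Adj u w) : ∃ τ ∈ coloringGroup G k κ, IsToggle G κ (κ s(u, w)) τ := by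
  obtain ⟨τ, hτ⟩ := exists_isToggle_s10 hκ (κ s(u, w))
  obtain ⟨h1, hk⟩ := Finset.mem_Icc.1 (hκ.1 _ (G.mem_edgeSet.2 h))
  exact ⟨τ, Subgroup.subset_closure ⟨_, h1, hk, hτ⟩, hτ⟩

lemma exists_mem_coloringGroup_apply_eq (hκ : IsProperEdgeColoring G k κ)
    (hc : G.Connected) (u v : V) : ∃ g ∈ coloringGroup G k κ, g u = v := by
  obtain ⟨p⟩ := hc u v
  induction p with
  | nil => exact ⟨1, one_mem _, rfl⟩
  | @cons u w v h _ ih =>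
    obtain ⟨g, hg, hgw⟩ := ih
    obtain ⟨τ, hτ, hτu⟩ := exists_isToggle_mem_coloringGroup hκ h
    refine ⟨g * τ, mul_mem hg hτ, ?_⟩
    rw [Equiv.Perm.mul_apply, (hτu u w h.ne).2 ⟨h, rfl⟩, hgw]

variable {σ : Equiv.Perm V}

lemma eq_one_of_mem_centralizer_of_apply_eq (hκ : IsProperEdgeColoring G k κ)
    (hc : G.Connected) (hσ : σ ∈ Subgroup.centralizer (coloringGroup G k κ : Set _)) {v : V}
    (hv : σ v = v) : σ = 1 := by
  ext w
  obtain ⟨g, hg, rfl⟩ := exists_mem_coloringGroup_apply_eq hκ hc v w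
  rw [← Equiv.Perm.mul_apply, ← Subgroup.mem_centralizer_iff.1 hσ g hg, Equiv.Perm.mul_apply,
    hv, Equiv.Perm.one_apply]

lemma adj_apply_of_mem_centralizer (hκ : IsProperEdgeColoring G k κ)
    (hσ : σ ∈ Subgroup.centralizer (coloringGroup G k κ : Set _)) {u w : V}
    (h : G.Adj u w) : G.Adj (σ u) (σ w) := by
  obtain ⟨τ, hτ, hτt⟩ := exists_isToggle_mem_coloringGroup hκ h
  have hτσ : τ (σ u) = σ w := by
    rw [← Equiv.Perm.mul_apply, Subgroup.mem_centralizer_iff.1 hσ τ hτ, Equiv.Perm.mul_apply,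
      (hτt u w h.ne).2 ⟨h, rfl⟩]
  exact ((hτt _ _ (σ.injective.ne h.ne)).1 hτσ).1

def autOfMemCentralizer (hκ : IsProperEdgeColoring G k κ)
    (hσ : σ ∈ Subgroup.centralizer (coloringGroup G k κ : Set _)) : G ≃g G :=
  ⟨σ, fun {u w} => ⟨fun h => by simpa using adj_apply_of_mem_centralizer hκ (inv_mem hσ) h,
    adj_apply_of_mem_centralizer hκ hσ⟩⟩

lemma sq_eq_one_of_mem_centralizer [Fintype V] (hG : G.IsTree) (hκ : IsProperEdgeColoring G k κ)
    (hσ : σ ∈ Subgroup.centralizer (coloringGroup G k κ : Set _)) : σ ^ 2 = 1 := by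
  by_cases hfix : ∃ v, σ v = v
  · obtain ⟨v, hv⟩ := hfix
    rw [eq_one_of_mem_centralizer_of_apply_eq hκ hG.connected hσ hv, one_pow]
  · push Not at hfix
    obtain ⟨v, hv⟩ := hG.exists_apply_apply_eq_self (autOfMemCentralizer hκ hσ) hfix
    exact eq_one_of_mem_centralizer_of_apply_eq hκ hG.connected (pow_mem hσ 2)
      (by rwa [sq, Equiv.Perm.mul_apply] : (σ ^ 2) v = v)

end ColoringGroup

/-- For a proper edge coloring of a tree, either the centralizer of
`𝔊_κ` in `Sym(V)` is trivial, or `|V| = 2m` is even and `𝔊_κ` embeds into the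
hyperoctahedral group `C₂ ≀ S_m` of signed permutations of `m` letters (realized as the
centralizer of the sign-flip involution in `Sym(Fin m × Bool)`). -/
theorem stmt_10 {V : Type*} [Fintype V] (G : SimpleGraph V) (hG : G.IsTree)
    (k : ℕ) (κ : Sym2 V → ℕ) (hκ : IsProperEdgeColoring G k κ) :
    (∀ σ ∈ Subgroup.centralizer (coloringGroup G k κ : Set (Equiv.Perm V)), σ = 1) ∨
    (∃ m : ℕ, Fintype.card V = 2 * m ∧
      ∃ f : ↥(coloringGroup G k κ) →*
          ↥(Subgroup.centralizer ({negPerm m} : Set (Equiv.Perm (Fin m × Bool)))),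
        Function.Injective f) := by
  by_cases htriv : ∀ σ ∈ Subgroup.centralizer (coloringGroup G k κ : Set (Equiv.Perm V)), σ = 1
  · exact Or.inl htriv
  push Not at htriv
  obtain ⟨σ, hσ, hσ1⟩ := htriv
  have hfree : ∀ v, σ v ≠ v := fun v hv =>
    hσ1 (eq_one_of_mem_centralizer_of_apply_eq hκ hG.connected hσ hv)
  obtain ⟨m, hm, e, he⟩ :=
    exists_equiv_permCongr_eq_negPerm (sq_eq_one_of_mem_centralizer hG hκ hσ) hfree
  refine Or.inr ⟨m, hm, ?_⟩
  rw [← he]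
  exact Subgroup.exists_injective_hom_centralizer e.permCongrHom hσ
end

section
/- Let (G,κ) be a proper edge coloring of a tree that contains a symmetric edge. Then 𝔊_κ = Sym(V(G)), the full symmetric group on the vertices of G. -/
open scoped Classical

/-- An edge `e` of `(G,κ)` is a *symmetric edge* if all edges incident to `e` have
pairwise distinct colors, and there is a set `S` of colors containing the colors of all
edges incident to `e` but not the color of `e`, such that deleting all edges colored by
a color in `S` leaves a graph with exactly one connected component of even order. -/
def IsSymmetricEdge {V : Type*} [Fintype V] (G : SimpleGraph V) (k : ℕ)
    (κ : Sym2 V → ℕ) (e : Sym2 V) : Prop :=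
  e ∈ G.edgeSet ∧
  (∀ f g : Sym2 V, f ∈ G.edgeSet → g ∈ G.edgeSet → f ≠ e → g ≠ e → f ≠ g →
    (∃ v, v ∈ f ∧ v ∈ e) → (∃ v, v ∈ g ∧ v ∈ e) → κ f ≠ κ g) ∧
  ∃ S : Finset ℕ, S ⊆ Finset.Icc 1 k ∧
    (∀ f ∈ G.edgeSet, f ≠ e → (∃ v, v ∈ f ∧ v ∈ e) → κ f ∈ S) ∧
    κ e ∉ S ∧
    (∃! C : (G.deleteEdges {f : Sym2 V | κ f ∈ S}).ConnectedComponent, Even C.supp.ncard)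

/-!
Let `xy` be the symmetric edge and delete the colours `S` of its incident edges. In the
remaining forest `H` the edge `xy` is a component and every other component has odd order.
In a properly coloured forest, the product of the colour toggles (each colour once, in any
order) has the components as its cycles: removing an edge `uv` splits off a factor `swap u v`,
and multiplying by the transposition of two points in different cycles merges them. Hence this
product is `swap x y` times cycles of odd length, and an odd power of it is `swap x y`.
Conjugating by a toggle moves this transposition along an edge at `x` or `y`; since the
colours at `xy` are pairwise distinct, every toggle moving `x` elsewhere fixes `y`, and so
`swap x z` lies in the group for every vertex `z` of the tree. These transpositions generate
the full symmetric group.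
-/

open Equiv Function

namespace Equiv.Perm

variable {α : Type*}

theorem sameCycle_mul_comm_iff {f g : Perm α} {x y : α} :
    (f * g).SameCycle x y ↔ (g * f).SameCycle (g x) (g y) := by
  have hconj : g * f = g * (f * g) * g⁻¹ := by group
  rw [hconj, sameCycle_conj]
  simp

variable [Finite α]

theorem minimalPeriod_eq_ncard_sameCycle (g : Perm α) (z : α) :
    minimalPeriod g z = {w | g.SameCycle z w}.ncard := by
  have := Fintype.ofFinite α
  have horbit : MulAction.orbit (Subgroup.zpowers g) z = {w | g.SameCycle z w} := by
    ext w
    simp [MulAction.mem_orbit_iff, SameCycle, Subgroup.smul_def]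
  rw [← horbit, ← Nat.card_coe_set_eq, Nat.card_eq_fintype_card]
  exact MulAction.minimalPeriod_eq_card (a := g) (b := z)

/-- The `N`-th power of `g` is `swap x y` for `N` the (odd) product of the periods of all
points other than `x` and `y`. -/
theorem swap_mem_zpowers_of_odd_minimalPeriod [DecidableEq α] {g : Perm α} {x y : α}
    (hx : g x = y) (hy : g y = x) (hodd : ∀ z, z ≠ x → z ≠ y → Odd (minimalPeriod g z)) :
    swap x y ∈ Subgroup.zpowers g := by
  have := Fintype.ofFinite α
  set W := Finset.univ.filter fun z => z ≠ x ∧ z ≠ y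
  set N := ∏ z ∈ W, minimalPeriod g z
  have hN : Odd N := Finset.prod_induction _ Odd (fun _ _ => Odd.mul) odd_one fun z hz =>
    hodd z (Finset.mem_filter.mp hz).2.1 (Finset.mem_filter.mp hz).2.2
  have hsq : ∀ z, (g ^ 2) z = z → (g ^ N) z = g z := by
    intro z hfix
    obtain ⟨m, hm⟩ := hN
    rw [hm, pow_succ', pow_mul, mul_apply, pow_apply_eq_self_of_apply_eq_self hfix]
  have hgN : g ^ N = swap x y := by
    ext z
    by_cases hzx : z = x
    · subst hzx
      rw [hsq z (by rw [sq, mul_apply, hx, hy]), hx, swap_apply_left]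
    by_cases hzy : z = y
    · subst hzy
      rw [hsq z (by rw [sq, mul_apply, hy, hx]), hy, swap_apply_right]
    have hper : IsPeriodicPt g N z := (isPeriodicPt_minimalPeriod g z).trans_dvd
      (Finset.dvd_prod_of_mem _ (Finset.mem_filter.mpr ⟨Finset.mem_univ z, hzx, hzy⟩))
    rw [swap_apply_of_ne_of_ne hzx hzy, ← iterate_eq_pow]
    exact hper
  exact hgN ▸ Subgroup.npow_mem_zpowers g N

theorem SameCycle.of_mul_swap [DecidableEq α] {g : Perm α} {u v x y : α}
    (h : (g * swap u v).SameCycle x y) :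
    g.SameCycle x y ∨ (g.SameCycle x u ∧ g.SameCycle v y) ∨
      (g.SameCycle x v ∧ g.SameCycle u y) := by
  obtain ⟨n, rfl⟩ := h.exists_nat_pow_eq
  clear h
  induction n with
  | zero => exact Or.inl (SameCycle.refl g x)
  | succ n ih =>
    rw [pow_succ', mul_apply, mul_apply]
    set z := ((g * swap u v) ^ n) x
    by_cases hzu : z = u
    · rw [hzu, swap_apply_left]
      rw [hzu] at ih
      rcases ih with h | ⟨h, -⟩ | ⟨h, -⟩
      · exact Or.inr (Or.inl ⟨h, sameCycle_apply_right.mpr (SameCycle.refl g v)⟩)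
      · exact Or.inr (Or.inl ⟨h, sameCycle_apply_right.mpr (SameCycle.refl g v)⟩)
      · exact Or.inl (sameCycle_apply_right.mpr h)
    by_cases hzv : z = v
    · rw [hzv, swap_apply_right]
      rw [hzv] at ih
      rcases ih with h | ⟨h, -⟩ | ⟨h, -⟩
      · exact Or.inr (Or.inr ⟨h, sameCycle_apply_right.mpr (SameCycle.refl g u)⟩)
      · exact Or.inl (sameCycle_apply_right.mpr h)
      · exact Or.inr (Or.inr ⟨h, sameCycle_apply_right.mpr (SameCycle.refl g u)⟩)
    rw [swap_apply_of_ne_of_ne hzu hzv]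
    exact ih.imp sameCycle_apply_right.mpr
      (Or.imp (And.imp_right sameCycle_apply_right.mpr) (And.imp_right sameCycle_apply_right.mpr))

/-- Starting from `u`, the permutation `g * swap u v` runs through the `g`-cycle of `v`
(which avoids `u`) until it comes back to `v`. -/
theorem sameCycle_mul_swap_of_not_sameCycle_s11 [DecidableEq α] {g : Perm α} {u v : α}
    (h : ¬ g.SameCycle u v) :
    (g * swap u v).SameCycle u v := by
  have key : ∀ n : ℕ, (g * swap u v).SameCycle u v ∨
      (g * swap u v).SameCycle u ((g ^ (n + 1)) v) := by
    intro n
    induction n with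
    | zero => exact Or.inr ⟨1, by simp⟩
    | succ n ih =>
      refine ih.elim Or.inl fun hn => ?_
      by_cases hv : (g ^ (n + 1)) v = v
      · rw [hv] at hn
        exact Or.inl hn
      have hu : (g ^ (n + 1)) v ≠ u := fun hu =>
        h (SameCycle.symm ⟨((n + 1 : ℕ) : ℤ), by rw [zpow_natCast]; exact hu⟩)
      have hstep : (g * swap u v) ((g ^ (n + 1)) v) = (g ^ (n + 1 + 1)) v := by
        rw [mul_apply, swap_apply_of_ne_of_ne hu hv, pow_succ' g (n + 1), mul_apply]
      exact Or.inr (hstep ▸ sameCycle_apply_right.mpr hn)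
  have hord := Nat.sub_add_cancel (orderOf_pos g)
  simpa [hord, pow_orderOf_eq_one] using key (orderOf g - 1)

theorem sameCycle_mul_swap_iff_s11 [DecidableEq α] {g : Perm α} {u v x y : α} (h : ¬ g.SameCycle u v) :
    (g * swap u v).SameCycle x y ↔ g.SameCycle x y ∨ (g.SameCycle x u ∧ g.SameCycle v y) ∨
      (g.SameCycle x v ∧ g.SameCycle u y) := by
  have huv := sameCycle_mul_swap_of_not_sameCycle_s11 h
  have hback : ∀ {a b}, g.SameCycle a b → (g * swap u v).SameCycle a b := by
    intro a b hab
    rw [← mul_swap_mul_self u v g] at hab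
    rcases hab.of_mul_swap with h1 | ⟨h1, h2⟩ | ⟨h1, h2⟩
    · exact h1
    · exact h1.trans (huv.trans h2)
    · exact h1.trans (huv.symm.trans h2)
  refine ⟨SameCycle.of_mul_swap, ?_⟩
  rintro (h1 | ⟨h1, h2⟩ | ⟨h1, h2⟩)
  · exact hback h1
  · exact (hback h1).trans (huv.trans (hback h2))
  · exact (hback h1).trans (huv.symm.trans (hback h2))

end Equiv.Perm

theorem Subgroup.swap_apply_mem {α : Type*} [DecidableEq α] {K : Subgroup (Perm α)} {σ : Perm α}
    {a b : α} (hσ : σ ∈ K) (h : swap a b ∈ K) : swap (σ a) (σ b) ∈ K := by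
  rw [swap_apply_apply]
  exact K.mul_mem (K.mul_mem hσ h) (K.inv_mem hσ)

theorem Subgroup.eq_top_of_forall_swap_mem {α : Type*} [Finite α] [DecidableEq α]
    (K : Subgroup (Perm α)) (x : α) (h : ∀ z, swap x z ∈ K) : K = ⊤ := by
  rw [eq_top_iff, ← Perm.closure_isSwap, Subgroup.closure_le]
  rintro _ ⟨u, v, -, rfl⟩
  exact SubmonoidClass.swap_mem_trans K (swap_comm x u ▸ h u) (h v)

namespace SimpleGraph

variable {V : Type*} {H : SimpleGraph V} {u v x y : V}

theorem Reachable.mem_of_adj_closed {s : Set V} (hs : ∀ p q, H.Adj p q → p ∈ s → q ∈ s)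
    (h : H.Reachable x y) (hx : x ∈ s) : y ∈ s := by
  obtain ⟨p⟩ := h
  induction p with
  | nil => exact hx
  | cons hadj _ ih => exact ih (hs _ _ hadj hx)

theorem Adj.reachable_iff_deleteEdges (huv : H.Adj u v) (x y : V) :
    H.Reachable x y ↔ (H.deleteEdges {s(u, v)}).Reachable x y ∨
      ((H.deleteEdges {s(u, v)}).Reachable x u ∧ (H.deleteEdges {s(u, v)}).Reachable v y) ∨
      ((H.deleteEdges {s(u, v)}).Reachable x v ∧ (H.deleteEdges {s(u, v)}).Reachable u y) := by
  set H' := H.deleteEdges {s(u, v)}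
  have hle : H' ≤ H := deleteEdges_le _
  constructor
  · rintro ⟨p⟩
    induction p with
    | nil => exact Or.inl .rfl
    | @cons a b c hab _ ih =>
      by_cases hE : s(a, b) = s(u, v)
      · rcases Sym2.eq_iff.mp hE with ⟨rfl, rfl⟩ | ⟨rfl, rfl⟩
        · rcases ih with h | ⟨-, h⟩ | ⟨-, h⟩
          · exact Or.inr (Or.inl ⟨.rfl, h⟩)
          · exact Or.inr (Or.inl ⟨.rfl, h⟩)
          · exact Or.inl h
        · rcases ih with h | ⟨-, h⟩ | ⟨-, h⟩
          · exact Or.inr (Or.inr ⟨.rfl, h⟩)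
          · exact Or.inl h
          · exact Or.inr (Or.inr ⟨.rfl, h⟩)
      · have hab' : H'.Adj a b := deleteEdges_adj.mpr ⟨hab, hE⟩
        exact ih.imp hab'.reachable.trans
          (Or.imp (And.imp_left hab'.reachable.trans) (And.imp_left hab'.reachable.trans))
  · rintro (h | ⟨h₁, h₂⟩ | ⟨h₁, h₂⟩)
    · exact h.mono hle
    · exact ((h₁.mono hle).trans huv.reachable).trans (h₂.mono hle)
    · exact ((h₁.mono hle).trans huv.symm.reachable).trans (h₂.mono hle)

end SimpleGraph

open SimpleGraph

section

variable {V : Type*}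

/-- The third condition of `IsProperEdgeColoring`, for an arbitrary graph. -/
def IsProperLabeling (H : SimpleGraph V) (κ : Sym2 V → ℕ) : Prop :=
  ∀ u v w : V, H.Adj u v → H.Adj u w → v ≠ w → κ s(u, v) ≠ κ s(u, w)

namespace IsProperLabeling

variable {H H' : SimpleGraph V} {κ : Sym2 V → ℕ}

theorem mono (hp : IsProperLabeling H κ) (hle : H' ≤ H) : IsProperLabeling H' κ :=
  fun u v w h₁ h₂ hne => hp u v w (hle h₁) (hle h₂) hne

theorem eq_of_adj_of_eq (hp : IsProperLabeling H κ) {u v w : V} (h₁ : H.Adj u v)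
    (h₂ : H.Adj u w) (h : κ s(u, v) = κ s(u, w)) : v = w :=
  by_contra fun hne => hp u v w h₁ h₂ hne h

end IsProperLabeling

namespace IsToggle

variable {H H' : SimpleGraph V} {κ : Sym2 V → ℕ} {a : ℕ} {τ τ' : Perm V}

theorem apply_eq_of_apply_ne (h : IsToggle H κ a τ) (h' : IsToggle H κ a τ') {v : V}
    (hv : τ v ≠ v) : τ' v = τ v :=
  (h' v _ (Ne.symm hv)).mpr ((h v _ (Ne.symm hv)).mp rfl)

theorem unique_s11 (h : IsToggle H κ a τ) (h' : IsToggle H κ a τ') : τ = τ' := by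
  ext v
  by_cases hv : τ v = v
  · by_cases hv' : τ' v = v
    · rw [hv, hv']
    · exact h'.apply_eq_of_apply_ne h hv'
  · exact (h.apply_eq_of_apply_ne h' hv).symm

theorem reachable_apply_s11 (h : IsToggle H κ a τ) (v : V) : H.Reachable v (τ v) := by
  by_cases hv : τ v = v
  · rw [hv]
  · exact ((h v _ (Ne.symm hv)).mp rfl).1.reachable

theorem congr (h : IsToggle H κ a τ) (hH : ∀ x y, κ s(x, y) = a → (H.Adj x y ↔ H'.Adj x y)) :
    IsToggle H' κ a τ :=
  fun v w hvw => (h v w hvw).trans (and_congr_left (hH v w))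

theorem deleteEdges_mul_swap_s11 (h : IsToggle H κ a τ) (hp : IsProperLabeling H κ) {u v : V}
    (huv : H.Adj u v) (ha : κ s(u, v) = a) :
    IsToggle (H.deleteEdges {s(u, v)}) κ a (τ * swap u v) := by
  have hu : τ u = v := (h u v huv.ne).mpr ⟨huv, ha⟩
  have hv : τ v = u := (h v u huv.ne.symm).mpr ⟨huv.symm, by rwa [Sym2.eq_swap]⟩
  have hvu : κ s(v, u) = a := by rwa [Sym2.eq_swap]
  intro p q hpq
  rw [Perm.mul_apply, deleteEdges_adj, Set.mem_singleton_iff]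
  by_cases hpu : p = u
  · subst hpu
    rw [swap_apply_left, hv]
    refine iff_of_false hpq fun ⟨⟨hadj, hne⟩, hq⟩ => hne ?_
    rw [hp.eq_of_adj_of_eq hadj huv (hq.trans ha.symm)]
  by_cases hpv : p = v
  · subst hpv
    rw [swap_apply_right, hu]
    refine iff_of_false hpq fun ⟨⟨hadj, hne⟩, hq⟩ => hne ?_
    rw [hp.eq_of_adj_of_eq hadj huv.symm (hq.trans hvu.symm), Sym2.eq_swap]
  have hne : s(p, q) ≠ s(u, v) := fun he => by
    rcases Sym2.eq_iff.mp he with ⟨h₁, -⟩ | ⟨h₁, -⟩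
    exacts [hpu h₁, hpv h₁]
  rw [swap_apply_of_ne_of_ne hpu hpv, h p q hpq]
  exact ⟨fun ⟨hadj, hq⟩ => ⟨⟨hadj, hne⟩, hq⟩, fun ⟨⟨hadj, _⟩, hq⟩ => ⟨hadj, hq⟩⟩

end IsToggle

theorem exists_isToggle_s11 {H : SimpleGraph V} {κ : Sym2 V → ℕ} (hp : IsProperLabeling H κ)
    (a : ℕ) : ∃ τ : Perm V, IsToggle H κ a τ := by
  let f : V → V := fun v => if h : ∃ w, H.Adj v w ∧ κ s(v, w) = a then h.choose else v
  have hf : ∀ v w, H.Adj v w → κ s(v, w) = a → f v = w := by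
    intro v w h₁ h₂
    have hex : ∃ w, H.Adj v w ∧ κ s(v, w) = a := ⟨w, h₁, h₂⟩
    simp only [f, dif_pos hex]
    exact hp.eq_of_adj_of_eq hex.choose_spec.1 h₁ (hex.choose_spec.2.trans h₂.symm)
  have hf' : ∀ v, f v = v ∨ (H.Adj v (f v) ∧ κ s(v, f v) = a) := by
    intro v
    by_cases hex : ∃ w, H.Adj v w ∧ κ s(v, w) = a
    · simp only [f, dif_pos hex]
      exact Or.inr hex.choose_spec
    · exact Or.inl (dif_neg hex)
  have hinv : Involutive f := fun v => by
    rcases hf' v with h | ⟨h₁, h₂⟩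
    · rw [h, h]
    · exact hf _ _ h₁.symm (by rwa [Sym2.eq_swap])
  refine ⟨hinv.toPerm f, fun v w hvw => ⟨fun h => ?_, fun ⟨h₁, h₂⟩ => hf v w h₁ h₂⟩⟩
  change f v = w at h
  rcases hf' v with h' | h'
  · exact absurd (h'.symm.trans h) hvw
  · exact h ▸ h'

noncomputable def toggle {H : SimpleGraph V} {κ : Sym2 V → ℕ} (hp : IsProperLabeling H κ)
    (a : ℕ) : Perm V :=
  (exists_isToggle_s11 hp a).choose

theorem isToggle_toggle {H : SimpleGraph V} {κ : Sym2 V → ℕ} (hp : IsProperLabeling H κ)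
    (a : ℕ) : IsToggle H κ a (toggle hp a) :=
  (exists_isToggle_s11 hp a).choose_spec

section Forest

variable {H : SimpleGraph V} {κ : Sym2 V → ℕ} {u v : V}

theorem reachable_prod_toggle_apply (hp : IsProperLabeling H κ) (L : List ℕ) (v : V) :
    H.Reachable v ((L.map (toggle hp)).prod v) := by
  induction L generalizing v with
  | nil => rfl
  | cons b L ih =>
    rw [List.map_cons, List.prod_cons, Perm.mul_apply]
    exact (ih v).trans ((isToggle_toggle hp b).reachable_apply_s11 _)

theorem toggle_deleteEdges_of_ne (hp : IsProperLabeling H κ)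
    (hp' : IsProperLabeling (H.deleteEdges {s(u, v)}) κ) {b : ℕ} (hb : b ≠ κ s(u, v)) :
    toggle hp' b = toggle hp b := by
  refine ((isToggle_toggle hp b).congr fun x y hxy => ?_).unique_s11 (isToggle_toggle hp' b) |>.symm
  rw [deleteEdges_adj, Set.mem_singleton_iff]
  exact ⟨fun h => ⟨h, fun he => hb (hxy ▸ he ▸ rfl)⟩, And.left⟩

theorem toggle_eq_toggle_deleteEdges_mul_swap (hp : IsProperLabeling H κ) (huv : H.Adj u v)
    (hp' : IsProperLabeling (H.deleteEdges {s(u, v)}) κ) :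
    toggle hp (κ s(u, v)) = toggle hp' (κ s(u, v)) * swap u v := by
  rw [← ((isToggle_toggle hp _).deleteEdges_mul_swap_s11 hp huv rfl).unique_s11 (isToggle_toggle hp' _),
    mul_swap_mul_self]

theorem sameCycle_mul_swap_iff_reachable [Finite V] {g : Perm V} (huv : H.Adj u v)
    (hbridge : ¬ (H.deleteEdges {s(u, v)}).Reachable u v)
    (hg : ∀ x y, g.SameCycle x y ↔ (H.deleteEdges {s(u, v)}).Reachable x y) (x y : V) :
    (g * swap u v).SameCycle x y ↔ H.Reachable x y := by
  rw [Perm.sameCycle_mul_swap_iff_s11 (by rwa [hg]), huv.reachable_iff_deleteEdges]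
  simp only [hg]

/-- Rotating the product so that the toggle of the colour of `uv` comes last conjugates it by a
product of toggles, which preserves components. -/
theorem sameCycle_prod_toggle_iff_reachable_of_deleteEdges [Finite V]
    (hp : IsProperLabeling H κ) (hp' : IsProperLabeling (H.deleteEdges {s(u, v)}) κ)
    (huv : H.Adj u v) (hbridge : ¬ (H.deleteEdges {s(u, v)}).Reachable u v) {L₁ L₂ : List ℕ}
    (hL₁ : ∀ b ∈ L₁, b ≠ κ s(u, v)) (hL₂ : ∀ b ∈ L₂, b ≠ κ s(u, v))
    (IH : ∀ x y, ((L₂ ++ L₁ ++ [κ s(u, v)]).map (toggle hp')).prod.SameCycle x y ↔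
      (H.deleteEdges {s(u, v)}).Reachable x y) (x y : V) :
    ((L₁ ++ κ s(u, v) :: L₂).map (toggle hp)).prod.SameCycle x y ↔ H.Reachable x y := by
  have htog : ∀ L₀ : List ℕ, (∀ b ∈ L₀, b ≠ κ s(u, v)) →
      L₀.map (toggle hp) = L₀.map (toggle hp') := fun L₀ hL₀ =>
    List.map_congr_left fun b hb => (toggle_deleteEdges_of_ne hp hp' (hL₀ b hb)).symm
  set A := (L₁.map (toggle hp')).prod
  set B := (L₂.map (toggle hp')).prod
  have hprod : ((L₁ ++ κ s(u, v) :: L₂).map (toggle hp)).prod =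
      A * (toggle hp' (κ s(u, v)) * swap u v * B) := by
    rw [List.map_append, List.map_cons, List.prod_append, List.prod_cons, htog L₁ hL₁,
      htog L₂ hL₂, toggle_eq_toggle_deleteEdges_mul_swap hp huv hp', mul_assoc _ (swap u v)]
  have hprod' : ((L₂ ++ L₁ ++ [κ s(u, v)]).map (toggle hp')).prod =
      B * A * toggle hp' (κ s(u, v)) := by
    simp [A, B, mul_assoc]
  have hB : ∀ z, H.Reachable z (B z) := fun z =>
    (reachable_prod_toggle_apply hp' L₂ z).mono (deleteEdges_le _)
  rw [hprod, ← mul_assoc, Perm.sameCycle_mul_comm_iff, ← mul_assoc, ← mul_assoc,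
    sameCycle_mul_swap_iff_reachable huv hbridge (hprod' ▸ IH)]
  exact ⟨fun h => (hB x).trans (h.trans (hB y).symm),
    fun h => (hB x).symm.trans (h.trans (hB y))⟩

theorem sameCycle_prod_toggle_iff_reachable [Finite V] (hac : H.IsAcyclic)
    (hp : IsProperLabeling H κ) {L : List ℕ} (hL : L.Nodup) (hcov : ∀ f ∈ H.edgeSet, κ f ∈ L)
    (x y : V) : ((L.map (toggle hp)).prod).SameCycle x y ↔ H.Reachable x y := by
  obtain ⟨n, hn⟩ : ∃ n, H.edgeSet.ncard = n := ⟨_, rfl⟩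
  induction n generalizing H L x y with
  | zero =>
    obtain rfl : H = ⊥ := edgeSet_eq_empty.mp ((Set.ncard_eq_zero (Set.toFinite _)).mp hn)
    have hone : ∀ b, toggle hp b = 1 := fun b =>
      (isToggle_toggle hp b).unique_s11 fun _ _ hpq => iff_of_false hpq fun h => h.1
    rw [List.prod_eq_one (by simp [hone]), Perm.sameCycle_one, reachable_bot]
  | succ n ih =>
    obtain ⟨u, v, huv⟩ : ∃ u v, H.Adj u v := by
      obtain ⟨e, he⟩ : H.edgeSet.Nonempty :=
        Set.nonempty_of_ncard_ne_zero (by rw [hn]; exact n.succ_ne_zero)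
      induction e using Sym2.ind
      exact ⟨_, _, he⟩
    obtain ⟨L₁, L₂, rfl⟩ := List.append_of_mem (hcov s(u, v) huv)
    have hle : H.deleteEdges {s(u, v)} ≤ H := deleteEdges_le _
    have hperm : (L₁ ++ κ s(u, v) :: L₂).Perm (L₂ ++ L₁ ++ [κ s(u, v)]) := by
      simpa using List.perm_append_comm (l₁ := L₁ ++ [κ s(u, v)]) (l₂ := L₂)
    have hn' : (H.deleteEdges {s(u, v)}).edgeSet.ncard = n := by
      rw [edgeSet_deleteEdges, Set.ncard_sdiff_singleton_of_mem (H.mem_edgeSet.mpr huv), hn,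
        Nat.add_sub_cancel]
    have hbridge : ¬ (H.deleteEdges {s(u, v)}).Reachable u v :=
      isBridge_iff.mp (isAcyclic_iff_forall_adj_isBridge.mp hac huv)
    have hL' := hperm.nodup_iff.mp hL
    rw [List.nodup_append, List.nodup_cons] at hL
    exact sameCycle_prod_toggle_iff_reachable_of_deleteEdges hp (hp.mono hle) huv hbridge
      (fun b hb hba => hL.2.2 b hb _ List.mem_cons_self hba)
      (fun b hb hba => hL.2.1.1 (hba ▸ hb))
      (fun x y => ih (hac.anti hle) (hp.mono hle) hL'
        (fun f hf => hperm.mem_iff.mp (hcov f (edgeSet_mono hle hf))) x y hn') x y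

end Forest

theorem swap_mem_zpowers_of_sameCycle_iff_reachable [Finite V] {H : SimpleGraph V} {g : Perm V}
    {x y : V} (hcyc : ∀ p q, g.SameCycle p q ↔ H.Reachable p q) (hxy : H.Adj x y)
    (hcomp : ∀ z, H.Reachable x z ↔ z ∈ s(x, y))
    (heven : ∀ C : H.ConnectedComponent, Even C.supp.ncard → C = H.connectedComponentMk x) :
    swap x y ∈ Subgroup.zpowers g := by
  have hsupp : ∀ z, (H.connectedComponentMk z).supp = {w | g.SameCycle z w} := fun z => by
    ext w
    simp [ConnectedComponent.mem_supp_iff, ConnectedComponent.eq, hcyc, reachable_comm]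
  have hmoves : ∀ p ∈ s(x, y), g p ∈ s(x, y) ∧ g p ≠ p := by
    intro p hp
    refine ⟨(hcomp _).mp ((((hcomp p).mpr hp).trans ((hcyc p (g p)).mp ?_))), fun hfix => ?_⟩
    · exact Perm.sameCycle_apply_right.mpr (Perm.SameCycle.refl g p)
    have hsc := (hcyc x y).mpr hxy.reachable
    rcases Sym2.mem_iff.mp hp with rfl | rfl
    · exact hxy.ne (hsc.eq_of_left hfix)
    · exact hxy.ne (hsc.symm.eq_of_left hfix).symm
  have hgx : g x = y := by
    obtain ⟨hmem, hne⟩ := hmoves x (Sym2.mem_mk_left x y)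
    exact (Sym2.mem_iff.mp hmem).resolve_left hne
  have hgy : g y = x := by
    obtain ⟨hmem, hne⟩ := hmoves y (Sym2.mem_mk_right x y)
    exact (Sym2.mem_iff.mp hmem).resolve_right hne
  refine Perm.swap_mem_zpowers_of_odd_minimalPeriod hgx hgy fun z hzx hzy => ?_
  rw [Perm.minimalPeriod_eq_ncard_sameCycle, ← hsupp, ← Nat.not_even_iff_odd]
  intro hodd
  rcases Sym2.mem_iff.mp ((hcomp z).mp (ConnectedComponent.eq.mp (heven _ hodd)).symm) with h | h
  exacts [hzx h, hzy h]

section SymmetricEdge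

variable {G : SimpleGraph V} {k : ℕ} {κ : Sym2 V → ℕ} {x y : V}

theorem reachable_deleteEdges_iff_mem_of_incident {S : Finset ℕ} (hxy : G.Adj x y)
    (hinc : ∀ f ∈ G.edgeSet, f ≠ s(x, y) → (∃ v, v ∈ f ∧ v ∈ s(x, y)) → κ f ∈ S)
    (hcS : κ s(x, y) ∉ S) (z : V) :
    (G.deleteEdges {f | κ f ∈ S}).Reachable x z ↔ z ∈ s(x, y) := by
  refine ⟨fun h => h.mem_of_adj_closed (s := {z | z ∈ s(x, y)}) ?_ (Sym2.mem_mk_left x y), ?_⟩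
  · intro p q hpq hp
    by_contra hq
    rw [deleteEdges_adj] at hpq
    exact hpq.2 (hinc _ hpq.1 (fun he => hq (he ▸ Sym2.mem_mk_right p q))
      ⟨p, Sym2.mem_mk_left p q, hp⟩)
  · intro hz
    rcases Sym2.mem_iff.mp hz with rfl | rfl
    · rfl
    · exact (deleteEdges_adj.mpr ⟨hxy, hcS⟩).reachable

theorem swap_mem_coloringGroup [Finite V] (hac : G.IsAcyclic) (hκ : IsProperEdgeColoring G k κ)
    (hxy : G.Adj x y) {S : Finset ℕ}
    (hinc : ∀ f ∈ G.edgeSet, f ≠ s(x, y) → (∃ v, v ∈ f ∧ v ∈ s(x, y)) → κ f ∈ S)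
    (hcS : κ s(x, y) ∉ S)
    (heven : ∃! C : (G.deleteEdges {f | κ f ∈ S}).ConnectedComponent, Even C.supp.ncard) :
    swap x y ∈ coloringGroup G k κ := by
  set H := G.deleteEdges {f | κ f ∈ S}
  have hle : H ≤ G := deleteEdges_le _
  have hp : IsProperLabeling H κ := IsProperLabeling.mono hκ.2.2 hle
  have hcomp := reachable_deleteEdges_iff_mem_of_incident hxy hinc hcS
  have hadj : ∀ {b}, b ∉ S → ∀ p q, κ s(p, q) = b → (H.Adj p q ↔ G.Adj p q) := by
    intro b hb p q hpq
    rw [deleteEdges_adj, Set.mem_ofPred_eq, hpq]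
    exact and_iff_left hb
  set L := (Finset.Icc 1 k \ S).toList
  have hg : (L.map (toggle hp)).prod ∈ coloringGroup G k κ := by
    refine Subgroup.list_prod_mem _ fun τ hτ => ?_
    obtain ⟨b, hb, rfl⟩ := List.mem_map.mp hτ
    obtain ⟨hbk, hbS⟩ := Finset.mem_sdiff.mp (Finset.mem_toList.mp hb)
    exact Subgroup.subset_closure ⟨b, (Finset.mem_Icc.mp hbk).1, (Finset.mem_Icc.mp hbk).2,
      (isToggle_toggle hp b).congr (hadj hbS)⟩
  have hcov : ∀ f ∈ H.edgeSet, κ f ∈ L := by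
    intro f hf
    rw [edgeSet_deleteEdges] at hf
    exact Finset.mem_toList.mpr (Finset.mem_sdiff.mpr ⟨hκ.1 f hf.1, hf.2⟩)
  have hcyc := sameCycle_prod_toggle_iff_reachable (hac.anti hle) hp (Finset.nodup_toList _) hcov
  have hHxy : H.Adj x y := deleteEdges_adj.mpr ⟨hxy, hcS⟩
  have hpair : (H.connectedComponentMk x).supp.ncard = 2 := by
    rw [← Set.ncard_pair hxy.ne]
    congr 1
    ext w
    rw [ConnectedComponent.mem_supp_iff, ConnectedComponent.eq, reachable_comm, hcomp,
      Sym2.mem_iff, Set.mem_insert_iff, Set.mem_singleton_iff]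
  obtain ⟨C₀, -, huniq⟩ := heven
  have heven' : ∀ C : H.ConnectedComponent, Even C.supp.ncard → C = H.connectedComponentMk x :=
    fun C hC => (huniq C hC).trans (huniq _ (show Even _ by rw [hpair]; exact even_two)).symm
  exact Subgroup.zpowers_le.mpr hg
    (swap_mem_zpowers_of_sameCycle_iff_reachable hcyc hHxy hcomp heven')

theorem IsToggle.apply_eq_self_of_pairwise_ne {τ : Perm V} {b : ℕ} (hτ : IsToggle G κ b τ)
    (hxy : G.Adj x y)
    (hpair : ∀ f g : Sym2 V, f ∈ G.edgeSet → g ∈ G.edgeSet → f ≠ s(x, y) → g ≠ s(x, y) →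
      f ≠ g → (∃ v, v ∈ f ∧ v ∈ s(x, y)) → (∃ v, v ∈ g ∧ v ∈ s(x, y)) → κ f ≠ κ g)
    (hx : τ x ≠ x) (hxy' : τ x ≠ y) : τ y = y := by
  by_contra hy
  have hX := (hτ x (τ x) (Ne.symm hx)).mp rfl
  have hY := (hτ y (τ y) (Ne.symm hy)).mp rfl
  have hyx : τ y ≠ x := fun h =>
    hxy' ((hτ x y hxy.ne).mpr ⟨hxy, by rw [Sym2.eq_swap, ← h]; exact hY.2⟩)
  refine hpair s(x, τ x) s(y, τ y) hX.1 hY.1 (fun h => hxy' (Sym2.congr_right.mp h))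
    (fun h => hyx (Sym2.congr_right.mp (h.trans Sym2.eq_swap))) (fun h => ?_)
    ⟨x, Sym2.mem_mk_left _ _, Sym2.mem_mk_left _ _⟩
    ⟨y, Sym2.mem_mk_left _ _, Sym2.mem_mk_right _ _⟩ (hX.2.trans hY.2.symm)
  rcases Sym2.mem_iff.mp (h ▸ Sym2.mem_mk_left x (τ x)) with h | h
  exacts [hxy.ne h, hyx h.symm]

theorem coloringGroup_eq_top_of_swap_mem [Finite V] (hconn : G.Connected)
    (hκ : IsProperEdgeColoring G k κ) (hxy : G.Adj x y)
    (hpair : ∀ f g : Sym2 V, f ∈ G.edgeSet → g ∈ G.edgeSet → f ≠ s(x, y) → g ≠ s(x, y) →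
      f ≠ g → (∃ v, v ∈ f ∧ v ∈ s(x, y)) → (∃ v, v ∈ g ∧ v ∈ s(x, y)) → κ f ≠ κ g)
    (hswap : swap x y ∈ coloringGroup G k κ) : coloringGroup G k κ = ⊤ := by
  set K := coloringGroup G k κ
  have hp : IsProperLabeling G κ := hκ.2.2
  have hx : ∀ {b τ}, IsToggle G κ b τ → τ ∈ K → swap x (τ x) ∈ K := by
    intro b τ hτ hτK
    by_cases hfix : τ x = x
    · rw [hfix, swap_self]
      exact K.one_mem
    by_cases hτxy : τ x = y
    · rwa [hτxy]
    have hconj := Subgroup.swap_apply_mem hτK hswap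
    rw [hτ.apply_eq_self_of_pairwise_ne hxy hpair hfix hτxy, swap_comm] at hconj
    exact SubmonoidClass.swap_mem_trans K hswap hconj
  refine K.eq_top_of_forall_swap_mem x fun z => (hconn.preconnected x z).mem_of_adj_closed
    (s := {z | swap x z ∈ K}) (fun p q hpq hxp => ?_) (show swap x x ∈ K by
      rw [swap_self]; exact K.one_mem)
  have hτ := isToggle_toggle hp (κ s(p, q))
  have hτK : toggle hp (κ s(p, q)) ∈ K := Subgroup.subset_closure
    ⟨_, (Finset.mem_Icc.mp (hκ.1 _ hpq)).1, (Finset.mem_Icc.mp (hκ.1 _ hpq)).2, hτ⟩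
  have hconj := Subgroup.swap_apply_mem hτK hxp
  rw [(hτ p q hpq.ne).mpr ⟨hpq, rfl⟩] at hconj
  exact SubmonoidClass.swap_mem_trans K (hx hτ hτK) hconj

end SymmetricEdge

end

/-- If a proper edge coloring of a tree contains a symmetric edge,
then the coloring group is the full symmetric group on the vertices. -/
theorem stmt_11 {V : Type*} [Fintype V] (G : SimpleGraph V) (hG : G.IsTree)
    (k : ℕ) (κ : Sym2 V → ℕ) (hκ : IsProperEdgeColoring G k κ)
    (e : Sym2 V) (he : IsSymmetricEdge G k κ e) :
    coloringGroup G k κ = ⊤ := by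
  induction e using Sym2.ind with
  | _ x y =>
    obtain ⟨hxy, hpair, S, -, hinc, hcS, heven⟩ := he
    exact coloringGroup_eq_top_of_swap_mem hG.connected hκ hxy hpair
      (swap_mem_coloringGroup hG.isAcyclic hκ hxy hinc hcS heven)
end

section
/- Let n ≥ 3, let G be the path graph on vertices 1,…,n with edges {i, i+1} for 1 ≤ i ≤ n−1, and let κ color the edge {i, i+1} with color 1 if i is odd and color 2 if i is even (the proper edge coloring of the path with two colors). Then the coloring group 𝔊_κ is isomorphic to the dihedral group of order 2n. -/
open scoped Classical

/-- The proper 2-coloring of the path graph on `Fin n` (edges `{m, m+1}` for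
`0 ≤ m ≤ n-2`, using 0-indexed vertices) in which the `m`-th edge `{m, m+1}` receives
color `(m % 2) + 1`, i.e. the colors alternate `1, 2, 1, 2, …` along the path. -/
def alternatingPathColoring (n : ℕ) : Sym2 (Fin n) → ℕ :=
  Sym2.lift ⟨fun a b => min a.val b.val % 2 + 1, fun a b => by simp only []; rw [min_comm]⟩



namespace Stmt18Aux

/-- conjugation of permutation groups by an equivalence, as a `MulEquiv`. -/
def permME {α β : Type*} (e : α ≃ β) : Equiv.Perm α ≃* Equiv.Perm β :=
  { Equiv.permCongr e with
    map_mul' := fun p q => by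
      ext x
      simp [Equiv.permCongr_apply, Equiv.Perm.mul_apply] }

lemma permME_symm_apply {α β : Type*} (e : α ≃ β) (σ : Equiv.Perm β) (x : α) :
    (permME e).symm σ x = e.symm (σ (e x)) := rfl

/-- The vertex relabeling `Fin n → ZMod n`. -/
def gf (n : ℕ) (k : Fin n) : ZMod n :=
  if k.val % 2 = 0 then -((k.val / 2 : ℕ) : ZMod n) else ((k.val / 2 + 1 : ℕ) : ZMod n)

lemma cast_inj_of_lt {n a b : ℕ} [NeZero n] (ha : a < n) (hb : b < n)
    (h : (a : ZMod n) = b) : a = b := by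
  rw [← ZMod.val_cast_of_lt ha, ← ZMod.val_cast_of_lt hb, h]

lemma cast_ne_zero {n s : ℕ} (h1 : 0 < s) (h2 : s < n) : (s : ZMod n) ≠ 0 := by
  intro h
  rw [ZMod.natCast_eq_zero_iff] at h
  exact absurd (Nat.le_of_dvd h1 h) (by omega)

lemma gf_injective (n : ℕ) (hn : 3 ≤ n) : Function.Injective (gf n) := by
  haveI : NeZero n := ⟨by omega⟩
  intro k k' h
  have hk := k.isLt
  have hk' := k'.isLt
  unfold gf at h
  by_cases h1 : k.val % 2 = 0 <;> by_cases h2 : k'.val % 2 = 0 <;>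
    simp only [h1, h2, if_true, if_false, if_pos, if_neg, neg_inj] at h
  · have := cast_inj_of_lt (by omega) (by omega) h
    exact Fin.ext (by omega)
  · exfalso
    have key : ((k.val / 2 + (k'.val / 2 + 1) : ℕ) : ZMod n) = 0 := by
      push_cast
      push_cast at h
      linear_combination -h
    exact cast_ne_zero (by omega) (by omega) key
  · exfalso
    have key : ((k'.val / 2 + (k.val / 2 + 1) : ℕ) : ZMod n) = 0 := by
      push_cast
      push_cast at h
      linear_combination h
    exact cast_ne_zero (by omega) (by omega) key
  · have := cast_inj_of_lt (by omega) (by omega) h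
    exact Fin.ext (by omega)

/-- The relabeling as an `Equiv`. -/
noncomputable def ge (n : ℕ) (hn : 3 ≤ n) : Fin n ≃ ZMod n := by
  haveI : NeZero n := ⟨by omega⟩
  exact Equiv.ofBijective (gf n)
    ((Fintype.bijective_iff_injective_and_card _).2
      ⟨gf_injective n hn, by simp [ZMod.card]⟩)

lemma ge_apply (n : ℕ) (hn : 3 ≤ n) (x : Fin n) : ge n hn x = gf n x := rfl

/-- The homomorphism from the dihedral group to permutations of `ZMod n`. -/
def dihedralHom (n : ℕ) : DihedralGroup n →* Equiv.Perm (ZMod n) :=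
  MonoidHom.mk'
    (fun g => match g with
      | .r i => Equiv.addRight i
      | .sr i => (Equiv.neg _).trans (Equiv.addLeft (-i)))
    (by
      rintro (i | i) (j | j) <;> ext x <;>
        simp [DihedralGroup.r_mul_r, DihedralGroup.r_mul_sr, DihedralGroup.sr_mul_r,
          DihedralGroup.sr_mul_sr, Equiv.Perm.mul_apply] <;> ring)

def sig1 (n : ℕ) : Equiv.Perm (ZMod n) := dihedralHom n (.sr (-1))
def sig2 (n : ℕ) : Equiv.Perm (ZMod n) := dihedralHom n (.sr 0)

lemma sig1_apply (n : ℕ) (x : ZMod n) : sig1 n x = 1 + -x := by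
  show -(-1) + -x = 1 + -x; ring

lemma sig2_apply (n : ℕ) (x : ZMod n) : sig2 n x = -x := by
  show -(0:ZMod n) + -x = -x; ring

end Stmt18Aux

namespace Stmt18Aux

lemma sig1_invol (n : ℕ) (x : ZMod n) : sig1 n (sig1 n x) = x := by
  rw [sig1_apply, sig1_apply]; ring

lemma sig2_invol (n : ℕ) (x : ZMod n) : sig2 n (sig2 n x) = x := by
  rw [sig2_apply, sig2_apply]; ring

lemma comp1 {n : ℕ} {x y : Fin n} (hx : x.val % 2 = 0) (hxy : x.val + 1 = y.val) :
    sig1 n (gf n x) = gf n y := by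
  unfold gf
  rw [if_pos hx, if_neg (by omega), sig1_apply]
  have hd : y.val / 2 = x.val / 2 := by omega
  rw [hd]; push_cast; ring

lemma comp2 {n : ℕ} {x y : Fin n} (hx : x.val % 2 = 1) (hxy : x.val + 1 = y.val) :
    sig2 n (gf n x) = gf n y := by
  unfold gf
  rw [if_neg (by omega), if_pos (by omega), sig2_apply]
  have hd : y.val / 2 = x.val / 2 + 1 := by omega
  rw [hd]

lemma fix1 {n : ℕ} {x : Fin n} (hx : x.val % 2 = 0) (hxn : x.val + 1 = n) :
    sig1 n (gf n x) = gf n x := by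
  unfold gf
  rw [if_pos hx, sig1_apply]
  have h0 : ((x.val / 2 + 1 + x.val / 2 : ℕ) : ZMod n) = 0 := by
    rw [show x.val / 2 + 1 + x.val / 2 = n by omega]; exact ZMod.natCast_self n
  push_cast at h0 ⊢
  linear_combination h0

lemma fix2 {n : ℕ} {x : Fin n} (hx : x.val % 2 = 1) (hxn : x.val + 1 = n) :
    sig2 n (gf n x) = gf n x := by
  unfold gf
  rw [if_neg (by omega), sig2_apply]
  have h0 : (((x.val / 2 + 1) + (x.val / 2 + 1) : ℕ) : ZMod n) = 0 := by
    rw [show (x.val / 2 + 1) + (x.val / 2 + 1) = n by omega]; exact ZMod.natCast_self n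
  push_cast at h0 ⊢
  linear_combination -h0

lemma fix0 {n : ℕ} {x : Fin n} (hx : x.val = 0) : sig2 n (gf n x) = gf n x := by
  unfold gf
  rw [if_pos (by omega), sig2_apply, hx]
  simp

noncomputable def tog1 (n : ℕ) (hn : 3 ≤ n) : Equiv.Perm (Fin n) :=
  (permME (ge n hn)).symm (sig1 n)

noncomputable def tog2 (n : ℕ) (hn : 3 ≤ n) : Equiv.Perm (Fin n) :=
  (permME (ge n hn)).symm (sig2 n)

lemma tog1_eq_iff (n : ℕ) (hn : 3 ≤ n) (v w : Fin n) :
    tog1 n hn v = w ↔ gf n w = sig1 n (gf n v) := by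
  rw [tog1, permME_symm_apply, Equiv.symm_apply_eq, eq_comm]
  exact Iff.rfl

lemma tog2_eq_iff (n : ℕ) (hn : 3 ≤ n) (v w : Fin n) :
    tog2 n hn v = w ↔ gf n w = sig2 n (gf n v) := by
  rw [tog2, permME_symm_apply, Equiv.symm_apply_eq, eq_comm]
  exact Iff.rfl

end Stmt18Aux

section Stmt18Main

open Stmt18Aux

lemma altcol_apply (n : ℕ) (a b : Fin n) :
    alternatingPathColoring n s(a, b) = min a.val b.val % 2 + 1 := rfl

lemma isToggle1 (n : ℕ) (hn : 3 ≤ n) :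
    IsToggle (SimpleGraph.pathGraph n) (alternatingPathColoring n) 1 (tog1 n hn) := by
  intro v w hvw
  rw [tog1_eq_iff, SimpleGraph.pathGraph_adj, altcol_apply]
  constructor
  · intro h
    by_cases hv : v.val % 2 = 0
    · by_cases hvn : v.val + 1 < n
      · have key := comp1 (x := v) (y := (⟨v.val + 1, hvn⟩ : Fin n)) hv rfl
        have hw : w = (⟨v.val + 1, hvn⟩ : Fin n) := gf_injective n hn (h.trans key)
        subst hw
        exact ⟨Or.inl rfl, by simp [Nat.min_eq_left]; omega⟩
      · exfalso
        have key := fix1 hv (by omega)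
        exact hvw ((gf_injective n hn (h.trans key)).symm)
    · have h1n : v.val - 1 < n := by omega
      have key := comp1 (x := (⟨v.val - 1, h1n⟩ : Fin n)) (y := v) (by simp; omega)
        (by simp; omega)
      have key' : gf n (⟨v.val - 1, h1n⟩ : Fin n) = sig1 n (gf n v) := by
        rw [← key, sig1_invol]
      have hw : w = (⟨v.val - 1, h1n⟩ : Fin n) := gf_injective n hn (h.trans key'.symm)
      subst hw
      refine ⟨Or.inr (by simp; omega), by simp; omega⟩
  · rintro ⟨hadj, hcol⟩
    rcases hadj with h1 | h1
    · have hm : min v.val w.val = v.val := Nat.min_eq_left (by omega)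
      rw [hm] at hcol
      exact (comp1 (by omega) h1).symm
    · have hm : min v.val w.val = w.val := Nat.min_eq_right (by omega)
      rw [hm] at hcol
      have key := comp1 (x := w) (y := v) (by omega) h1
      rw [← key, sig1_invol]

lemma isToggle2 (n : ℕ) (hn : 3 ≤ n) :
    IsToggle (SimpleGraph.pathGraph n) (alternatingPathColoring n) 2 (tog2 n hn) := by
  intro v w hvw
  rw [tog2_eq_iff, SimpleGraph.pathGraph_adj, altcol_apply]
  constructor
  · intro h
    by_cases hv : v.val % 2 = 1
    · by_cases hvn : v.val + 1 < n
      · have key := comp2 (x := v) (y := (⟨v.val + 1, hvn⟩ : Fin n)) hv rfl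
        have hw : w = (⟨v.val + 1, hvn⟩ : Fin n) := gf_injective n hn (h.trans key)
        subst hw
        exact ⟨Or.inl rfl, by simp [Nat.min_eq_left]; omega⟩
      · exfalso
        have key := fix2 hv (by omega)
        exact hvw ((gf_injective n hn (h.trans key)).symm)
    · by_cases hv0 : v.val = 0
      · exfalso
        have key := fix0 (n := n) (x := v) hv0
        exact hvw ((gf_injective n hn (h.trans key)).symm)
      · have h1n : v.val - 1 < n := by omega
        have key := comp2 (x := (⟨v.val - 1, h1n⟩ : Fin n)) (y := v) (by simp; omega)
          (by simp; omega)
        have key' : gf n (⟨v.val - 1, h1n⟩ : Fin n) = sig2 n (gf n v) := by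
          rw [← key, sig2_invol]
        have hw : w = (⟨v.val - 1, h1n⟩ : Fin n) := gf_injective n hn (h.trans key'.symm)
        subst hw
        refine ⟨Or.inr (by simp; omega), by simp; omega⟩
  · rintro ⟨hadj, hcol⟩
    rcases hadj with h1 | h1
    · have hm : min v.val w.val = v.val := Nat.min_eq_left (by omega)
      rw [hm] at hcol
      exact (comp2 (by omega) h1).symm
    · have hm : min v.val w.val = w.val := Nat.min_eq_right (by omega)
      rw [hm] at hcol
      have key := comp2 (x := w) (y := v) (by omega) h1
      rw [← key, sig2_invol]

lemma toggle_unique {V : Type*} {G : SimpleGraph V} {κ : Sym2 V → ℕ} {a : ℕ}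
    {τ τ' : Equiv.Perm V} (h1 : IsToggle G κ a τ) (h2 : IsToggle G κ a τ') : τ = τ' := by
  ext v
  by_cases h : τ v = v
  · rw [h]
    by_contra hne
    have hne' : v ≠ τ' v := hne
    have hc := (h2 v (τ' v) hne').1 rfl
    have h3 := (h1 v (τ' v) hne').2 hc
    exact hne (h.symm.trans h3)
  · have hc := (h1 v (τ v) (Ne.symm h)).1 rfl
    exact ((h2 v (τ v) (Ne.symm h)).2 hc).symm

lemma toggle_set_eq (n : ℕ) (hn : 3 ≤ n) :
    { τ : Equiv.Perm (Fin n) | ∃ a : ℕ, 1 ≤ a ∧ a ≤ 2 ∧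
        IsToggle (SimpleGraph.pathGraph n) (alternatingPathColoring n) a τ }
      = {tog1 n hn, tog2 n hn} := by
  ext τ
  simp only [Set.mem_setOf_eq, Set.mem_insert_iff, Set.mem_singleton_iff]
  constructor
  · rintro ⟨a, ha1, ha2, hτ⟩
    interval_cases a
    · exact Or.inl (toggle_unique hτ (isToggle1 n hn))
    · exact Or.inr (toggle_unique hτ (isToggle2 n hn))
  · rintro (rfl | rfl)
    · exact ⟨1, le_refl 1, by omega, isToggle1 n hn⟩
    · exact ⟨2, by omega, le_refl 2, isToggle2 n hn⟩

lemma dihedralHom_injective (n : ℕ) (hn : 3 ≤ n) : Function.Injective (dihedralHom n) := by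
  haveI : NeZero n := ⟨by omega⟩
  rw [injective_iff_map_eq_one]
  rintro (i | i) h
  · have h0 := congrArg (fun (p : Equiv.Perm (ZMod n)) => p 0) h
    simp only [Equiv.Perm.one_apply] at h0
    have : (0 : ZMod n) + i = 0 := h0
    rw [show DihedralGroup.r i = DihedralGroup.r 0 from by rw [show i = 0 by simpa using this]]
    rfl
  · exfalso
    have h0 := congrArg (fun (p : Equiv.Perm (ZMod n)) => p 0) h
    have h1 := congrArg (fun (p : Equiv.Perm (ZMod n)) => p 1) h
    simp only [Equiv.Perm.one_apply] at h0 h1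
    have e0 : -i + -(0 : ZMod n) = 0 := h0
    have e1 : -i + -(1 : ZMod n) = 1 := h1
    have h2 : ((2 : ℕ) : ZMod n) = 0 := by push_cast; linear_combination e0 - e1
    exact cast_ne_zero (by omega) (by omega) h2

lemma range_eq_closure (n : ℕ) (hn : 3 ≤ n) :
    (dihedralHom n).range = Subgroup.closure {sig1 n, sig2 n} := by
  haveI : NeZero n := ⟨by omega⟩
  apply le_antisymm
  · have hs1 : sig1 n ∈ Subgroup.closure {sig1 n, sig2 n} :=
      Subgroup.subset_closure (Set.mem_insert _ _)
    have hs2 : sig2 n ∈ Subgroup.closure {sig1 n, sig2 n} :=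
      Subgroup.subset_closure (Set.mem_insert_of_mem _ rfl)
    have hr : ∀ i : ZMod n, dihedralHom n (.r i) ∈ Subgroup.closure {sig1 n, sig2 n} := by
      intro i
      have : DihedralGroup.r i = (DihedralGroup.sr (-1) * DihedralGroup.sr 0) ^ i.val := by
        rw [DihedralGroup.sr_mul_sr]
        rw [show (0 : ZMod n) - (-1) = 1 by ring]
        rw [DihedralGroup.r_one_pow]
        rw [ZMod.natCast_rightInverse i]
      rw [this, map_pow, map_mul]
      exact pow_mem (mul_mem hs1 hs2) _
    rintro x ⟨g, rfl⟩
    rcases g with i | i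
    · exact hr i
    · have : DihedralGroup.sr i = DihedralGroup.sr 0 * DihedralGroup.r i := by
        rw [DihedralGroup.sr_mul_r, zero_add]
      rw [this, map_mul]
      exact mul_mem hs2 (hr i)
  · rw [Subgroup.closure_le]
    rintro x (rfl | rfl)
    · exact ⟨DihedralGroup.sr (-1), rfl⟩
    · exact ⟨DihedralGroup.sr 0, rfl⟩

end Stmt18Main

/-- For `n ≥ 3`, the coloring group of the path graph on `n` vertices
with the alternating proper 2-coloring is isomorphic to the dihedral group of order
`2n`. -/
theorem stmt_18 (n : ℕ) (hn : 3 ≤ n) :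
    Nonempty
      (↥(coloringGroup (SimpleGraph.pathGraph n) 2 (alternatingPathColoring n)) ≃*
        DihedralGroup n) := by
  classical
  haveI : NeZero n := ⟨by omega⟩
  set E := Stmt18Aux.permME (Stmt18Aux.ge n hn) with hE
  have hmap : Subgroup.map (E : Equiv.Perm (Fin n) →* Equiv.Perm (ZMod n))
      (coloringGroup (SimpleGraph.pathGraph n) 2 (alternatingPathColoring n))
      = (Stmt18Aux.dihedralHom n).range := by
    rw [coloringGroup, MonoidHom.map_closure, toggle_set_eq n hn,
      Set.image_insert_eq, Set.image_singleton]
    have e1 : E (Stmt18Aux.tog1 n hn) = Stmt18Aux.sig1 n := by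
      rw [Stmt18Aux.tog1]; exact E.apply_symm_apply _
    have e2 : E (Stmt18Aux.tog2 n hn) = Stmt18Aux.sig2 n := by
      rw [Stmt18Aux.tog2]; exact E.apply_symm_apply _
    rw [show ((E : Equiv.Perm (Fin n) →* Equiv.Perm (ZMod n)) : Equiv.Perm (Fin n) → Equiv.Perm (ZMod n)) = E from rfl]
    rw [e1, e2, range_eq_closure n hn]
  exact ⟨((E.subgroupMap _).trans (MulEquiv.subgroupCongr hmap)).trans
    (MonoidHom.ofInjective (dihedralHom_injective n hn)).symm⟩
end
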